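/- arXiv:2310.07013 — 11 statements merged into one kernel-verified Lean document; each statement's English description precedes it below -/
import Mathlib

section
/- Let n ≥ 3 be an integer, let D be a division ring whose characteristic is either 0 or greater than n, and let R = M_m(D) be the ring of m × m matrices over D with m ≥ 2. If f, g : R → R are additive maps satisfying f(X) + X^n · g(X⁻¹) = 0 for every invertible matrix X ∈ R, then f = 0 and g = 0. -/
open Matrix

section Aux
variable {m : ℕ} {D : Type*} [DivisionRing D]

/-- Right multiplication by a smul of a central scalar. -/
lemma mul_csmul {c : D} (hc : ∀ d : D, Commute c d)
    (A B : Matrix (Fin m) (Fin m) D) : A * (c • B) = c • (A * B) := by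
  ext i j
  simp only [Matrix.mul_apply, Matrix.smul_apply, smul_eq_mul, Finset.mul_sum]
  refine Finset.sum_congr rfl fun l _ => ?_
  rw [← mul_assoc, ← (hc (A i l)).eq, mul_assoc]

lemma csmul_pow {c : D} (hc : ∀ d : D, Commute c d)
    (A : Matrix (Fin m) (Fin m) D) (j : ℕ) : (c • A) ^ j = c ^ j • A ^ j := by
  induction j with
  | zero => simp
  | succ j ih =>
      rw [pow_succ, ih, pow_succ, pow_succ, Matrix.smul_mul,
        mul_csmul hc, smul_smul]

/-- The unit `1 + a E_{ij}` for `i ≠ j`. -/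
def tUnit {i j : Fin m} (hij : i ≠ j) (a : D) : (Matrix (Fin m) (Fin m) D)ˣ where
  val := 1 + Matrix.single i j a
  inv := 1 - Matrix.single i j a
  val_inv := by
    rw [add_mul, mul_sub, mul_sub, mul_one, one_mul, mul_one,
      Matrix.single_mul_single_of_ne (h := hij.symm) (d := a)]
    abel
  inv_val := by
    rw [sub_mul, mul_add, mul_add, mul_one, one_mul, mul_one,
      Matrix.single_mul_single_of_ne (h := hij.symm) (d := a)]
    abel

/-- An additive map on `M_m(D)`, `m ≥ 2`, vanishing on all units vanishes. -/
lemma addhom_eq_zero_of_vanish_units (hm : 2 ≤ m)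
    (φ : Matrix (Fin m) (Fin m) D →+ Matrix (Fin m) (Fin m) D)
    (hφ : ∀ u : (Matrix (Fin m) (Fin m) D)ˣ, φ u.val = 0)
    (A : Matrix (Fin m) (Fin m) D) : φ A = 0 := by
  have h1 : φ (1 : Matrix (Fin m) (Fin m) D) = 0 := hφ 1
  have hod : ∀ (i j : Fin m), i ≠ j → ∀ a : D, φ (Matrix.single i j a) = 0 := by
    intro i j hij a
    have hu : φ (1 + Matrix.single i j a) = 0 := hφ (tUnit hij a)
    have h2 : φ (1 + Matrix.single i j a) = φ 1 + φ (Matrix.single i j a) := map_add φ _ _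
    rw [hu, h1, zero_add] at h2
    exact h2.symm
  have hd : ∀ (i : Fin m) (a : D), φ (Matrix.single i i a) = 0 := by
    intro i a
    obtain ⟨j, hij⟩ : ∃ j : Fin m, i ≠ j := by
      rcases eq_or_ne i ⟨0, by omega⟩ with hi | hi
      · exact ⟨⟨1, by omega⟩, by simp [hi, Fin.ext_iff]⟩
      · exact ⟨⟨0, by omega⟩, hi⟩
    have hprod : (1 + Matrix.single i j a) * (1 + Matrix.single j i 1)
        = 1 + Matrix.single j i 1 + Matrix.single i j a + Matrix.single i i a := by
      simp only [add_mul, mul_add, one_mul, mul_one, Matrix.single_mul_single_same]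
      abel
    have hu : φ ((1 + Matrix.single i j a) * (1 + Matrix.single j i 1)) = 0 :=
      hφ ((tUnit hij a) * tUnit hij.symm 1)
    rw [hprod, map_add, map_add, map_add, h1, hod j i hij.symm 1, hod i j hij a,
      zero_add, zero_add, zero_add] at hu
    exact hu
  calc φ A = φ (∑ i, ∑ j, Matrix.single i j (A i j)) := by
        rw [← matrix_eq_sum_single A]
    _ = ∑ i, ∑ j, φ (Matrix.single i j (A i j)) := by rw [map_sum]; simp [map_sum]
    _ = 0 := by
        refine Finset.sum_eq_zero fun i _ => Finset.sum_eq_zero fun j _ => ?_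
        rcases eq_or_ne i j with rfl | hij
        · exact hd i _
        · exact hod i j hij _

end Aux

/-- Existence of a natural number `k` invertible in `D` with `k^n ≠ k^2` in `D`. -/
lemma exists_good_k {D : Type*} [DivisionRing D] (n : ℕ) (hn : 3 ≤ n)
    (hchar : ringChar D = 0 ∨ n < ringChar D) :
    ∃ k : ℕ, (k : D) ≠ 0 ∧ ((k ^ n - k ^ 2 : ℕ) : D) ≠ 0 := by
  rcases hchar with h0 | hp
  · haveI : CharP D 0 := h0 ▸ ringChar.charP D
    haveI : CharZero D := CharP.charP_to_charZero D
    refine ⟨2, by exact_mod_cast (two_ne_zero : (2:D) ≠ 0), ?_⟩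
    rw [Nat.cast_ne_zero]
    have h22 : (2:ℕ) ^ 2 < 2 ^ n := Nat.pow_lt_pow_right (by norm_num) (by omega)
    omega
  · set p := ringChar D with hpdef
    haveI hP : CharP D p := ringChar.charP D
    have hp3 : 3 < p := lt_of_le_of_lt hn hp
    have hprime : p.Prime := (CharP.char_is_prime_or_zero D p).resolve_right (by omega)
    haveI : Fact p.Prime := ⟨hprime⟩
    obtain ⟨ζ, hζ⟩ := IsCyclic.exists_generator (α := (ZMod p)ˣ)
    have hord : orderOf ζ = p - 1 := by
      rw [orderOf_eq_card_of_forall_mem_zpowers hζ, Nat.card_eq_fintype_card, ZMod.card_units]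
    have hzpow : ζ ^ (n - 2) ≠ 1 :=
      pow_ne_one_of_lt_orderOf (by omega) (by omega)
    set k : ℕ := ((ζ : ZMod p)).val with hk
    have hkz : ((k : ℕ) : ZMod p) = (ζ : ZMod p) := by
      rw [hk, ZMod.natCast_val, ZMod.cast_id]
    have hk0 : (k : D) ≠ 0 := by
      intro h
      rw [CharP.cast_eq_zero_iff D p] at h
      have : ((k : ℕ) : ZMod p) = 0 := (ZMod.natCast_eq_zero_iff k p).mpr h
      rw [hkz] at this
      exact (Units.ne_zero ζ) this
    refine ⟨k, hk0, ?_⟩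
    intro hcontra
    rw [CharP.cast_eq_zero_iff D p] at hcontra
    have hzero : ((k ^ n - k ^ 2 : ℕ) : ZMod p) = 0 :=
      (ZMod.natCast_eq_zero_iff _ p).mpr hcontra
    have hkne : k ≠ 0 := by
      intro hk0'
      apply hk0
      rw [hk0']; simp
    have hle : k ^ 2 ≤ k ^ n := Nat.pow_le_pow_right (Nat.pos_of_ne_zero hkne) (by omega)
    rw [Nat.cast_sub hle, sub_eq_zero, Nat.cast_pow, Nat.cast_pow, hkz] at hzero
    have hunits : ζ ^ n = ζ ^ 2 := Units.ext (by push_cast; exact hzero)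
    have h2 : ζ ^ 2 * ζ ^ (n - 2) = ζ ^ 2 * 1 := by
      rw [mul_one, ← pow_add]
      rw [show 2 + (n - 2) = n by omega, hunits]
    exact hzpow (mul_left_cancel h2)

/-- Theorem 1.6 (Theorem T2): Let `n ≥ 3`, `D` a division ring with `char D = 0` or
`char D > n`, and `R = M_m(D)` with `m ≥ 2`. If additive maps `f, g : R → R` satisfy
`f(X) + X^n * g(X⁻¹) = 0` for every invertible `X`, then `f = 0` and `g = 0`. -/
theorem stmt_1 (n m : ℕ) (hn : 3 ≤ n) (hm : 2 ≤ m) (D : Type*) [DivisionRing D]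
    (hchar : ringChar D = 0 ∨ n < ringChar D)
    (f g : Matrix (Fin m) (Fin m) D → Matrix (Fin m) (Fin m) D)
    (hf : ∀ X Y, f (X + Y) = f X + f Y)
    (hg : ∀ X Y, g (X + Y) = g X + g Y)
    (h : ∀ X : (Matrix (Fin m) (Fin m) D)ˣ, f (Units.val X) + (Units.val X) ^ n * g (Units.val X⁻¹) = 0) :
    (∀ X, f X = 0) ∧ (∀ X, g X = 0) := by
  obtain ⟨k, hk0, hkd⟩ : ∃ k : ℕ, (k : D) ≠ 0 ∧ ((k ^ n - k ^ 2 : ℕ) : D) ≠ 0 :=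
    exists_good_k n hn hchar
  set c : D := (k : D) with hcdef
  have hc : ∀ d : D, Commute c d := fun d => Nat.cast_commute k d
  have hcinv : ∀ d : D, Commute c⁻¹ d := fun d => (hc d).inv_left₀
  have hT1 : (c • (1 : Matrix (Fin m) (Fin m) D)) * (c⁻¹ • 1) = 1 := by
    rw [Matrix.smul_mul, Matrix.one_mul, smul_smul, mul_inv_cancel₀ hk0, one_smul]
  have hT2 : (c⁻¹ • (1 : Matrix (Fin m) (Fin m) D)) * (c • 1) = 1 := by
    rw [Matrix.smul_mul, Matrix.one_mul, smul_smul, inv_mul_cancel₀ hk0, one_smul]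
  set T : (Matrix (Fin m) (Fin m) D)ˣ := ⟨c • 1, c⁻¹ • 1, hT1, hT2⟩ with hTdef
  have fnsmul : ∀ (j : ℕ) (A : Matrix (Fin m) (Fin m) D), f (j • A) = j • f A := fun j A =>
    (AddMonoidHom.mk' f hf).map_nsmul j A
  have gnsmul : ∀ (j : ℕ) (A : Matrix (Fin m) (Fin m) D), g (j • A) = j • g A := fun j A =>
    (AddMonoidHom.mk' g hg).map_nsmul j A
  have fc : ∀ A, f (c • A) = c • f A := fun A => by
    rw [hcdef, Nat.cast_smul_eq_nsmul, fnsmul, ← Nat.cast_smul_eq_nsmul D]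
  have gc : ∀ A, g (c • A) = c • g A := fun A => by
    rw [hcdef, Nat.cast_smul_eq_nsmul, gnsmul, ← Nat.cast_smul_eq_nsmul D]
  have key : ∀ X : (Matrix (Fin m) (Fin m) D)ˣ,
      (Units.val X ^ n) * (c ^ n • g (c⁻¹ • Units.val X⁻¹)) =
        (Units.val X ^ n) * (c • g (Units.val X⁻¹)) := by
    intro X
    have h1 := h X
    have h2 := h (T * X)
    have hval : (Units.val (T * X)) = c • Units.val X := by
      show (c • 1) * Units.val X = _
      rw [Matrix.smul_mul, Matrix.one_mul]
    have hinv : (Units.val (T * X)⁻¹) = c⁻¹ • Units.val X⁻¹ := by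
      rw [_root_.mul_inv_rev]
      show Units.val X⁻¹ * (c⁻¹ • 1) = _
      rw [mul_csmul hcinv, mul_one]
    rw [hval, hinv, fc, csmul_pow hc, Matrix.smul_mul] at h2
    have h1' : f (Units.val X) = -(Units.val X ^ n * g (Units.val X⁻¹)) :=
      eq_neg_of_add_eq_zero_left h1
    rw [h1', smul_neg, neg_add_eq_zero] at h2
    rw [← mul_csmul (fun d => (hc d).pow_left n), ← mul_csmul hc] at h2
    exact h2.symm
  have hgu : ∀ Z : (Matrix (Fin m) (Fin m) D)ˣ, g (Units.val Z) = 0 := by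
    intro Z
    have hkey := key (Z * T)⁻¹
    rw [inv_inv] at hkey
    have hv : (Units.val (Z * T)) = c • Units.val Z := by
      show Units.val Z * (c • 1) = _
      rw [mul_csmul hc, mul_one]
    rw [hv, smul_smul, inv_mul_cancel₀ hk0, one_smul, gc, smul_smul] at hkey
    have hcancel : c ^ n • g (Units.val Z) = (c * c) • g (Units.val Z) :=
      ((((Z * T)⁻¹).isUnit.pow n)).mul_left_cancel hkey
    have hkne : k ≠ 0 := fun hk' => hk0 (by simp [hcdef, hk'])
    have hle : k ^ 2 ≤ k ^ n := Nat.pow_le_pow_right (Nat.pos_of_ne_zero hkne) (by omega)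
    have hcn : ((k ^ n - k ^ 2 : ℕ) : D) = c ^ n - c * c := by
      rw [Nat.cast_sub hle, Nat.cast_pow, Nat.cast_pow, hcdef, pow_two]
    ext i j
    have hij := congrArg (fun Mt : Matrix (Fin m) (Fin m) D => Mt i j) hcancel
    simp only [Matrix.smul_apply, smul_eq_mul] at hij
    have hsub : (c ^ n - c * c) * g (Units.val Z) i j = 0 := by rw [sub_mul, hij, sub_self]
    rw [← hcn] at hsub
    simp only [Matrix.zero_apply]
    exact (mul_eq_zero.mp hsub).resolve_left hkd
  have hfu : ∀ X : (Matrix (Fin m) (Fin m) D)ˣ, f (Units.val X) = 0 := by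
    intro X
    have h1 := h X
    rw [hgu X⁻¹, mul_zero, add_zero] at h1
    exact h1
  constructor
  · exact fun X => addhom_eq_zero_of_vanish_units hm (AddMonoidHom.mk' f hf) hfu X
  · exact fun X => addhom_eq_zero_of_vanish_units hm (AddMonoidHom.mk' g hg) hgu X
end

section
/- Let t ≥ 1 be an integer and let D be a division ring whose characteristic is either 0 or greater than t. Let a₀, a₁, …, a_t ∈ D with a₀ ≠ 0, and define p(a) = a₀a^t + a₁a^{t-1} + ⋯ + a_t for a ∈ D (coefficients multiplied on the left). If f : D → D is an additive map with f(1) = 0 such that p(a) · f(a) = 0 for all a ∈ D, then f = 0. -/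
open Finset

lemma alt_sum_choose_pow (t j : ℕ) (hj : j ≤ t) :
    (∑ k ∈ Finset.range (t + 1), (-1 : ℤ) ^ (t - k) * (t.choose k) * (k : ℤ) ^ j)
      = if j = t then (t.factorial : ℤ) else 0 := by
  induction t generalizing j with
  | zero =>
    interval_cases j
    simp
  | succ t IH =>
    rcases Nat.eq_zero_or_pos j with rfl | hjpos
    · have h1 : ∀ k ∈ Finset.range (t + 2),
          (-1 : ℤ) ^ (t + 1 - k) * ((t+1).choose k) * (k : ℤ) ^ 0
            = (-1 : ℤ) ^ (t + 1) * ((-1 : ℤ) ^ k * ((t+1).choose k)) := by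
        intro k hk
        have hk' : k ≤ t + 1 := Nat.lt_succ_iff.mp (Finset.mem_range.mp hk)
        have : (-1 : ℤ) ^ (t + 1 - k) * (-1 : ℤ) ^ k = (-1 : ℤ) ^ (t + 1) := by
          rw [← pow_add, Nat.sub_add_cancel hk']
        have h2 : (-1 : ℤ) ^ (t + 1 - k) = (-1 : ℤ) ^ (t + 1) * (-1 : ℤ) ^ k := by
          have hsq : ((-1 : ℤ) ^ k) * ((-1 : ℤ) ^ k) = 1 := by
            rw [← pow_add, ← two_mul, pow_mul]; norm_num
          calc (-1 : ℤ) ^ (t + 1 - k) = (-1 : ℤ) ^ (t + 1 - k) * (((-1:ℤ) ^ k) * ((-1:ℤ) ^ k)) := by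
                rw [hsq, mul_one]
            _ = (-1 : ℤ) ^ (t + 1) * (-1 : ℤ) ^ k := by rw [← mul_assoc, this]
        rw [h2]; ring
      rw [Finset.sum_congr rfl h1, ← Finset.mul_sum,
        Int.alternating_sum_range_choose_of_ne (Nat.succ_ne_zero t)]
      simp [Nat.pos_iff_ne_zero, (Nat.succ_ne_zero t).symm]
    · obtain ⟨jj, rfl⟩ := Nat.exists_eq_succ_of_ne_zero hjpos.ne'
      have hjj : jj ≤ t := Nat.succ_le_succ_iff.mp hj
      have step1 : (∑ k ∈ Finset.range (t + 2),
            (-1 : ℤ) ^ (t + 1 - k) * ((t+1).choose k) * (k : ℤ) ^ (jj+1))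
          = ∑ k ∈ Finset.range (t + 1),
            (-1 : ℤ) ^ (t - k) * ((t+1).choose (k+1)) * ((k : ℤ) + 1) ^ (jj+1) := by
        rw [Finset.sum_range_succ']
        simp [Nat.succ_sub_succ]
      have step2 : ∀ k ∈ Finset.range (t + 1),
          (-1 : ℤ) ^ (t - k) * ((t+1).choose (k+1)) * ((k : ℤ) + 1) ^ (jj+1)
            = (t + 1 : ℤ) * ∑ i ∈ Finset.range (jj + 1),
                ((-1 : ℤ) ^ (t - k) * (t.choose k) * (k:ℤ) ^ i) * (jj.choose i) := by
        intro k hk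
        have hc : ((t+1).choose (k+1) : ℤ) * ((k : ℤ) + 1) = (t + 1 : ℤ) * (t.choose k) := by
          have := Nat.add_one_mul_choose_eq t k
          have : ((t+1) * t.choose k : ℕ) = ((t+1).choose (k+1) * (k+1) : ℕ) := this
          exact_mod_cast (congrArg (fun n : ℕ => (n : ℤ)) this).symm
        have hpow : ((k : ℤ) + 1) ^ (jj + 1) = ((k:ℤ)+1) * ((k:ℤ)+1) ^ jj := by
          rw [pow_succ]; ring
        have hbin : ((k : ℤ) + 1) ^ jj = ∑ i ∈ Finset.range (jj+1), (k:ℤ)^i * (jj.choose i) := by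
          simpa using add_pow (k : ℤ) 1 jj
        rw [hpow, hbin]
        simp only [Finset.mul_sum]
        apply Finset.sum_congr rfl
        intro i _
        have : (-1:ℤ)^(t-k) * ((t+1).choose (k+1)) * (((k:ℤ)+1) * ((k:ℤ)^i * (jj.choose i)))
            = ((-1:ℤ)^(t-k)) * (((t+1).choose (k+1) : ℤ) * ((k : ℤ) + 1)) * ((k:ℤ)^i * (jj.choose i)) := by
          ring
        rw [this, hc]; ring
      rw [step1, Finset.sum_congr rfl step2, ← Finset.mul_sum, Finset.sum_comm]
      have inner : ∀ i ∈ Finset.range (jj + 1),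
          (∑ k ∈ Finset.range (t+1), ((-1:ℤ)^(t-k) * (t.choose k) * (k:ℤ)^i) * (jj.choose i))
            = (if i = t then (t.factorial : ℤ) else 0) * (jj.choose i) := by
        intro i hi
        rw [← Finset.sum_mul, IH i (le_trans (Nat.lt_succ_iff.mp (Finset.mem_range.mp hi)) hjj)]
      rw [Finset.sum_congr rfl inner]
      by_cases hcase : jj = t
      · subst hcase
        simp only [ite_mul, zero_mul]
        rw [Finset.sum_ite_eq' (Finset.range (jj+1)) jj]
        simp [Nat.factorial_succ]
      · have : ∀ i ∈ Finset.range (jj + 1),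
            (if i = t then (t.factorial : ℤ) else 0) * (jj.choose i) = 0 := by
          intro i hi
          have : i ≠ t := fun hit => hcase (le_antisymm hjj (hit ▸ Nat.lt_succ_iff.mp (Finset.mem_range.mp hi)))
          simp [this]
        rw [Finset.sum_congr rfl this]
        simp [hcase]

/-- Lemma 2.2: a left-polynomial with nonzero leading coefficient annihilating an
additive map `f` with `f 1 = 0` forces `f = 0`. -/
theorem stmt_3 (t : ℕ) (ht : 1 ≤ t) (D : Type*) [DivisionRing D]
    (hchar : ringChar D = 0 ∨ t < ringChar D)
    (a : ℕ → D) (ha : a 0 ≠ 0)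
    (f : D → D)
    (hf : ∀ x y : D, f (x + y) = f x + f y)
    (hf1 : f 1 = 0)
    (h : ∀ x : D, (∑ i ∈ Finset.range (t + 1), a i * x ^ (t - i)) * f x = 0) :
    ∀ x : D, f x = 0 := by
  intro x
  have hfn : ∀ n : ℕ, f (x + n) = f x := by
    intro n
    induction n with
    | zero => simp
    | succ n ih =>
      have : ((n + 1 : ℕ) : D) = (n : D) + 1 := by push_cast; ring
      rw [this, ← add_assoc, hf, hf1, add_zero, ih]
  have key : ∀ k : ℕ, (∑ i ∈ Finset.range (t + 1), a i * (x + (k : D)) ^ (t - i)) * f x = 0 := by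
    intro k
    rw [← hfn k]
    exact h _
  set c : ℕ → ℤ := fun k => (-1) ^ (t - k) * (t.choose k) with hc
  -- inner sum evaluation
  have hpowsum : ∀ e : ℕ, e ≤ t →
      (∑ k ∈ Finset.range (t + 1), c k • ((k : D)) ^ e)
        = if e = t then (t.factorial : D) else 0 := by
    intro e he
    have : ∀ k ∈ Finset.range (t + 1),
        c k • ((k : D)) ^ e = (((-1 : ℤ) ^ (t - k) * (t.choose k) * (k : ℤ) ^ e : ℤ) : D) := by
      intro k _
      rw [zsmul_eq_mul, hc]
      simp only [Int.cast_mul, Int.cast_pow, Int.cast_neg, Int.cast_one, Int.cast_natCast]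
    rw [Finset.sum_congr rfl this, ← Int.cast_sum, alt_sum_choose_pow t e he]
    split <;> simp
  have hinner : ∀ i ∈ Finset.range (t + 1),
      (∑ k ∈ Finset.range (t + 1), c k • (x + (k : D)) ^ (t - i))
        = if i = 0 then (t.factorial : D) else 0 := by
    intro i hi
    have hcomm : ∀ k : ℕ, Commute x ((k : D)) := fun k => (Nat.cast_commute k x).symm
    have hexp : ∀ k ∈ Finset.range (t + 1),
        c k • (x + (k : D)) ^ (t - i)
          = ∑ j ∈ Finset.range (t - i + 1),
              x ^ j * (c k • ((k : D)) ^ (t - i - j)) * ((t - i).choose j : D) := by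
      intro k _
      rw [(hcomm k).add_pow, Finset.smul_sum]
      apply Finset.sum_congr rfl
      intro j _
      rw [mul_smul_comm, smul_mul_assoc]
    rw [Finset.sum_congr rfl hexp, Finset.sum_comm]
    have hswap : ∀ j ∈ Finset.range (t - i + 1),
        (∑ k ∈ Finset.range (t + 1),
          x ^ j * (c k • ((k : D)) ^ (t - i - j)) * ((t - i).choose j : D))
          = x ^ j * (if t - i - j = t then (t.factorial : D) else 0) * ((t - i).choose j : D) := by
      intro j _
      rw [← hpowsum (t - i - j) (by omega)]
      rw [Finset.mul_sum, Finset.sum_mul]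
    rw [Finset.sum_congr rfl hswap]
    by_cases hi0 : i = 0
    · subst hi0
      have : ∀ j ∈ Finset.range (t - 0 + 1),
          x ^ j * (if t - 0 - j = t then (t.factorial : D) else 0) * ((t - 0).choose j : D)
            = if j = 0 then (t.factorial : D) else 0 := by
        intro j hj
        by_cases hj0 : j = 0
        · subst hj0; simp
        · have h2 : ¬ (t - j = t) := by
            have := Finset.mem_range.mp hj; omega
          simp [h2, hj0]
      rw [Finset.sum_congr rfl this, Finset.sum_ite_eq' (Finset.range (t - 0 + 1)) 0]
      simp
    · have : ∀ j ∈ Finset.range (t - i + 1),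
          x ^ j * (if t - i - j = t then (t.factorial : D) else 0) * ((t - i).choose j : D) = 0 := by
        intro j _
        have hii : i ≤ t := Nat.lt_succ_iff.mp (Finset.mem_range.mp hi)
        have h2 : ¬ (t - i - j = t) := by omega
        simp [h2]
      rw [Finset.sum_congr rfl this]
      simp [hi0]
  -- the alternating combination of the polynomial values
  have hA : (∑ k ∈ Finset.range (t + 1),
      c k • (∑ i ∈ Finset.range (t + 1), a i * (x + (k : D)) ^ (t - i)))
        = a 0 * (t.factorial : D) := by
    calc (∑ k ∈ Finset.range (t + 1),
        c k • (∑ i ∈ Finset.range (t + 1), a i * (x + (k : D)) ^ (t - i)))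
        = ∑ i ∈ Finset.range (t + 1), ∑ k ∈ Finset.range (t + 1),
            c k • (a i * (x + (k : D)) ^ (t - i)) := by
          simp only [Finset.smul_sum]
          rw [Finset.sum_comm]
      _ = ∑ i ∈ Finset.range (t + 1),
            a i * (∑ k ∈ Finset.range (t + 1), c k • (x + (k : D)) ^ (t - i)) := by
          apply Finset.sum_congr rfl
          intro i _
          rw [Finset.mul_sum]
          exact Finset.sum_congr rfl fun k _ => (mul_smul_comm _ _ _).symm
      _ = ∑ i ∈ Finset.range (t + 1), a i * (if i = 0 then (t.factorial : D) else 0) := by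
          exact Finset.sum_congr rfl fun i hi => by rw [hinner i hi]
      _ = a 0 * (t.factorial : D) := by
          rw [Finset.sum_eq_single 0 (fun i _ hi0 => by simp [hi0]) (by simp)]
          simp
  have hzero : (a 0 * (t.factorial : D)) * f x = 0 := by
    rw [← hA, Finset.sum_mul]
    refine Finset.sum_eq_zero fun k _ => ?_
    rw [smul_mul_assoc, key k, smul_zero]
  have hfac : (t.factorial : D) ≠ 0 := by
    rcases hchar with h0 | hlt
    · haveI : CharP D 0 := h0 ▸ ringChar.charP D
      haveI : CharZero D := CharP.charP_to_charZero D
      exact Nat.cast_ne_zero.mpr t.factorial_ne_zero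
    · have hp : (ringChar D).Prime := by
        rcases CharP.char_is_prime_or_zero D (ringChar D) with hp | h0
        · exact hp
        · omega
      intro h0
      rw [CharP.cast_eq_zero_iff D (ringChar D)] at h0
      have := (Nat.Prime.dvd_factorial hp).mp h0
      omega
  rcases mul_eq_zero.mp hzero with h1 | h1
  · exact absurd h1 (mul_ne_zero ha hfac)
  · exact h1
end

section
/- Let n ≥ 2 be an integer and let D be a division ring. If f, g : D → D are additive maps satisfying f(x) + x^n · g(x⁻¹) = 0 for all nonzero x ∈ D, then for every b ∈ D one has f(b) = (−∑_{k=1}^{n} C(n,k)(−b)^k + b^n) · f(1) + g(b), where C(n,k) denotes the binomial coefficient. -/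
/-- Lemma 3.2(a): `f(b) = (−∑_{k=1}^n C(n,k)(−b)^k + b^n) f(1) + g(b)`. -/
theorem stmt_6 (n : ℕ) (hn : 2 ≤ n) (D : Type*) [DivisionRing D]
    (f g : D → D)
    (hf : ∀ x y : D, f (x + y) = f x + f y)
    (hg : ∀ x y : D, g (x + y) = g x + g y)
    (h : ∀ x : D, x ≠ 0 → f x + x ^ n * g x⁻¹ = 0) :
    ∀ b : D,
      f b = (-(∑ k ∈ Finset.Icc 1 n, (n.choose k : D) * (-b) ^ k) + b ^ n) * f 1 + g b := by
  intro b
  have hn0 : n ≠ 0 := by omega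
  -- rewrite the coefficient as 1 - (1-b)^n + b^n
  have hsum : -(∑ k ∈ Finset.Icc 1 n, (n.choose k : D) * (-b) ^ k) + b ^ n
      = 1 - (1 - b) ^ n + b ^ n := by
    have hcomm : Commute (-b) (1 : D) := Commute.one_right _
    have hbin : (1 - b) ^ n
        = ∑ m ∈ Finset.range (n + 1), (-b) ^ m * 1 ^ (n - m) * (n.choose m : D) := by
      rw [show (1 : D) - b = -b + 1 by abel]
      exact hcomm.add_pow n
    have hins : Finset.range (n + 1) = insert 0 (Finset.Icc 1 n) := by
      ext k; simp; omega
    rw [hbin, hins, Finset.sum_insert (by simp)]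
    simp only [pow_zero, one_pow, mul_one, one_mul, Nat.choose_zero_right, Nat.cast_one]
    have hco : ∀ k ∈ Finset.Icc 1 n, (-b) ^ k * (n.choose k : D)
        = (n.choose k : D) * (-b) ^ k := by
      intro k _
      rw [(Nat.cast_commute (n.choose k) ((-b) ^ k)).eq]
    rw [Finset.sum_congr rfl hco]
    abel
  rw [hsum]
  -- basic additivity facts
  have f0 : f 0 = 0 := by
    have h2 := hf 0 0
    rw [add_zero] at h2
    exact (left_eq_add.mp h2)
  have g0 : g 0 = 0 := by
    have h2 := hg 0 0
    rw [add_zero] at h2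
    exact (left_eq_add.mp h2)
  have fsub : ∀ x y : D, f (x - y) = f x - f y := by
    intro x y
    have h2 := hf (x - y) y
    rw [sub_add_cancel] at h2
    rw [eq_sub_iff_add_eq, ← h2]
  have gsub : ∀ x y : D, g (x - y) = g x - g y := by
    intro x y
    have h2 := hg (x - y) y
    rw [sub_add_cancel] at h2
    rw [eq_sub_iff_add_eq, ← h2]
  have hg1 : g 1 = -(f 1) := by
    have h2 := h 1 one_ne_zero
    rw [inv_one, one_pow, one_mul] at h2
    exact eq_neg_of_add_eq_zero_right h2
  by_cases hb : b = 0
  · subst hb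
    rw [f0, g0, sub_zero, zero_pow hn0, one_pow, add_zero]
    norm_num
  by_cases hb1 : b = 1
  · subst hb1
    rw [sub_self, zero_pow hn0, one_pow, sub_zero, hg1]
    noncomm_ring
  -- main case : b ≠ 0, b ≠ 1
  have hc : (1 : D) - b ≠ 0 := sub_ne_zero.mpr (Ne.symm hb1)
  have hbn : b ^ n ≠ 0 := pow_ne_zero n hb
  have hcn : (1 - b) ^ n ≠ 0 := pow_ne_zero n hc
  -- g b = - b^n * f b⁻¹
  have hD := h b⁻¹ (inv_ne_zero hb)
  rw [inv_inv, inv_pow] at hD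
  have hDb : b ^ n * f b⁻¹ = -(g b) := by
    have h2 := congrArg (fun t => b ^ n * t) hD
    simp only [mul_add, ← mul_assoc, mul_inv_cancel₀ hbn, one_mul, mul_zero] at h2
    exact eq_neg_of_add_eq_zero_left h2
  -- g (1-b)⁻¹ from h at (1-b)
  have hC := h (1 - b) hc
  rw [show f (1 - b) = f 1 - f b from fsub 1 b] at hC
  have hgc : g (1 - b)⁻¹ = ((1 - b) ^ n)⁻¹ * (f b - f 1) := by
    have h1 : (1 - b) ^ n * g (1 - b)⁻¹ = f b - f 1 := by
      have := eq_neg_of_add_eq_zero_right hC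
      rw [this, neg_sub]
    rw [← h1, inv_mul_cancel_left₀ hcn]
  -- the key substitution x = b⁻¹ - 1
  have hx1 : b⁻¹ - 1 = b⁻¹ * (1 - b) := by
    rw [mul_sub, mul_one, inv_mul_cancel₀ hb]
  have hxne : b⁻¹ - 1 ≠ 0 := sub_ne_zero.mpr (fun hh => hb1 (by rwa [inv_eq_one] at hh))
  have hcomm1 : Commute (b⁻¹) (1 - b) := by
    exact ((Commute.one_right b).sub_right (Commute.refl b)).inv_left₀
  have hxinv : (b⁻¹ - 1)⁻¹ = (1 - b)⁻¹ - 1 := by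
    rw [hx1, mul_inv_rev, inv_inv]
    nth_rewrite 2 [← sub_sub_cancel 1 b]
    rw [mul_sub, mul_one, inv_mul_cancel₀ hc]
  have hpow : (b⁻¹ - 1) ^ n = (b ^ n)⁻¹ * (1 - b) ^ n := by
    rw [hx1, hcomm1.mul_pow, inv_pow]
  have hA := h (b⁻¹ - 1) hxne
  rw [hxinv, hpow, fsub, gsub, hg1, hgc, sub_neg_eq_add] at hA
  -- multiply hA by b^n on the left
  have E2 : b ^ n * f b⁻¹ - b ^ n * f 1 + (f b - f 1) + (1 - b) ^ n * f 1 = 0 := by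
    have h2 := congrArg (fun t => b ^ n * t) hA
    simp only [mul_add, mul_sub, mul_zero, ← mul_assoc] at h2
    rw [mul_inv_cancel₀ hbn, one_mul, mul_inv_cancel₀ hcn] at h2
    simp only [one_mul] at h2
    rw [← h2]
    abel
  rw [hDb] at E2
  have key : f b - ((1 - (1 - b) ^ n + b ^ n) * f 1 + g b)
      = -(g b) - b ^ n * f 1 + (f b - f 1) + (1 - b) ^ n * f 1 := by
    noncomm_ring
  rw [← sub_eq_zero, key, E2]
end

section
/- Let n ≥ 3 be an integer and let D be a division ring whose characteristic is either 0 or greater than n. If f, g : D → D are additive maps satisfying f(x) + x^n · g(x⁻¹) = 0 for all nonzero x ∈ D, then for every a ∈ D one has f(a²) = (−∑_{k=1}^{n} C(n,k)(−1)^k a^k + a^n) · f(a). -/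
open Polynomial

section stmt8helpers
variable {D : Type*} [DivisionRing D] {f g : D → D} {n : ℕ}

private lemma addf_zero' (hf : ∀ x y : D, f (x + y) = f x + f y) : f 0 = 0 := by
  have h := hf 0 0
  simp only [add_zero] at h
  exact (left_eq_add.mp h)

private lemma addf_neg' (hf : ∀ x y : D, f (x + y) = f x + f y) (x : D) : f (-x) = - f x := by
  have h := hf x (-x)
  rw [add_neg_cancel, addf_zero' hf] at h
  exact (neg_eq_of_add_eq_zero_right h.symm).symm

private lemma addf_nat' (hf : ∀ x y : D, f (x + y) = f x + f y) :
    ∀ k : ℕ, f (k : D) = (k : D) * f 1 := by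
  intro k
  induction k with
  | zero => simp [addf_zero' hf]
  | succ k ih =>
    push_cast
    rw [hf, ih, add_mul, one_mul]

private lemma natCast_ne' (hchar : ringChar D = 0 ∨ n < ringChar D) {m : ℕ}
    (h0 : 0 < m) (hm : m ≤ n) : (m : D) ≠ 0 := by
  intro hc
  rcases hchar with hh | hh
  · haveI : CharP D 0 := ringChar.of_eq hh
    haveI : CharZero D := CharP.charP_to_charZero D
    rw [Nat.cast_eq_zero] at hc
    omega
  · haveI : CharP D (ringChar D) := ringChar.charP D
    have hd := (CharP.cast_eq_zero_iff D (ringChar D) m).mp hc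
    have := Nat.le_of_dvd h0 hd
    omega

/-- Key identity I1. -/
private lemma keyI1' (hf : ∀ x y : D, f (x + y) = f x + f y)
    (hg : ∀ x y : D, g (x + y) = g x + g y)
    (h : ∀ x : D, x ≠ 0 → f x + x ^ n * g x⁻¹ = 0)
    (x : D) (hx : x ≠ 0) (hx1 : x ≠ 1) :
    f (x ^ 2) = f x - (1 - x) ^ n * f x + x ^ n * f x - x ^ n * f 1 := by
  have hy : (1 - x) ≠ 0 := sub_ne_zero.mpr fun e => hx1 e.symm
  have hcomm : Commute x (1 - x) := ((Commute.one_right x).sub_right (Commute.refl x))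
  have hw : (1 - x) * x = x - x ^ 2 := by noncomm_ring
  have hwne : (1 - x) * x ≠ 0 := mul_ne_zero hy hx
  have hinv : ((1 - x) * x)⁻¹ = x⁻¹ + (1 - x)⁻¹ := by
    rw [mul_inv_rev]
    have h1 : x⁻¹ * ((1 - x) + x) * (1 - x)⁻¹ = x⁻¹ + (1 - x)⁻¹ := by
      rw [mul_add, add_mul, mul_assoc x⁻¹ (1 - x) (1 - x)⁻¹, mul_inv_cancel₀ hy, mul_one,
        inv_mul_cancel₀ hx, one_mul]
    rw [← h1, sub_add_cancel, mul_one]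
  have hpow : ((1 - x) * x) ^ n = (1 - x) ^ n * x ^ n := hcomm.symm.mul_pow n
  have hpow2 : ((1 - x) * x) ^ n = x ^ n * (1 - x) ^ n := by
    rw [hpow]; exact (hcomm.pow_pow n n).symm.eq
  have e1 : x ^ n * g x⁻¹ = - f x := eq_neg_of_add_eq_zero_right (h x hx)
  have e2 : (1 - x) ^ n * g (1 - x)⁻¹ = - f (1 - x) := eq_neg_of_add_eq_zero_right (h (1 - x) hy)
  have e5 : f (1 - x) = f 1 - f x := by
    have hh := hf 1 (-x)
    rw [addf_neg' hf] at hh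
    simpa [sub_eq_add_neg] using hh
  have e3 : f ((1 - x) * x) = f x - f (x ^ 2) := by
    rw [hw]
    have hh := hf x (-(x ^ 2))
    rw [addf_neg' hf] at hh
    simpa [sub_eq_add_neg] using hh
  have hw' := h ((1 - x) * x) hwne
  rw [hinv, hg, e3, mul_add] at hw'
  nth_rewrite 2 [hpow2] at hw'
  rw [hpow, mul_assoc, e1, mul_assoc, e2, e5] at hw'
  rw [mul_neg, mul_neg, mul_sub] at hw'
  have hfin : f (x ^ 2) - (f x - (1 - x) ^ n * f x + x ^ n * f x - x ^ n * f 1)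
      = -(f x - f (x ^ 2) + (-((1 - x) ^ n * f x) + -(x ^ n * f 1 - x ^ n * f x))) := by
    abel
  rw [hw', neg_zero] at hfin
  exact sub_eq_zero.mp hfin

private lemma keyI2' (hev : Even n) (hfneg : ∀ x : D, f (-x) = - f x)
    (hI1 : ∀ x : D, x ≠ 0 → x ≠ 1 →
      f (x ^ 2) = f x - (1 - x) ^ n * f x + x ^ n * f x - x ^ n * f 1)
    (x : D) (h0 : x ≠ 0) (h1 : x ≠ 1) (hm1 : x ≠ -1) :
    (2 + 2 * x ^ n - (1 - x) ^ n - (1 + x) ^ n) * f x = 0 := by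
  have e1 := hI1 x h0 h1
  have e2 := hI1 (-x) (neg_ne_zero.mpr h0) (by
    intro hc; exact hm1 (by rw [← hc, neg_neg]))
  rw [neg_sq, hfneg, hev.neg_pow, sub_neg_eq_add] at e2
  have key : (2 + 2 * x ^ n - (1 - x) ^ n - (1 + x) ^ n) * f x =
      (f x - (1 - x) ^ n * f x + x ^ n * f x - x ^ n * f 1) -
      (-f x - (1 + x) ^ n * -f x + x ^ n * -f x - x ^ n * f 1) := by
    generalize (1 - x) ^ n = P
    generalize (1 + x) ^ n = Q
    generalize x ^ n = R
    noncomm_ring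
  rw [key, ← e1, ← e2, sub_self]

private lemma binom_sum' (b : D) :
    (1 - b) ^ n = 1 + ∑ k ∈ Finset.Icc 1 n, (n.choose k : D) * (-1 : D) ^ k * b ^ k := by
  have hc : Commute (-b) (1 : D) := Commute.one_right _
  have hap := hc.add_pow n
  have hset : Finset.range (n + 1) = insert 0 (Finset.Icc 1 n) := by
    ext k; simp [Nat.lt_succ_iff]; omega
  rw [hset, Finset.sum_insert (by simp)] at hap
  rw [show (1 : D) - b = -b + 1 from (neg_add_eq_sub b 1).symm, hap]
  simp only [pow_zero, one_pow, mul_one, one_mul, Nat.choose_zero_right, Nat.cast_one]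
  congr 1
  refine Finset.sum_congr rfl fun k _ => ?_
  rw [neg_pow b k, (Nat.cast_commute (n.choose k) ((-1 : D) ^ k * b ^ k)).symm.eq, ← mul_assoc]

private lemma f_one_zero' (hn : 3 ≤ n) (hev : Even n)
    (hchar : ringChar D = 0 ∨ n < ringChar D)
    (hfnat : ∀ k : ℕ, f (k : D) = (k : D) * f 1)
    (hI2 : ∀ x : D, x ≠ 0 → x ≠ 1 → x ≠ -1 →
      (2 + 2 * x ^ n - (1 - x) ^ n - (1 + x) ^ n) * f x = 0) :
    f 1 = 0 := by
  obtain ⟨j, hj⟩ := id hev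
  have hn4 : 4 ≤ n := by omega
  by_contra hf1
  have hD : ∀ m : ℕ, (m : D) ≠ 0 → (m : D) ≠ 1 → (m : D) ≠ -1 →
      ((2 + 2 * (m : ℤ) ^ n - (1 - (m : ℤ)) ^ n - (1 + (m : ℤ)) ^ n : ℤ) : D) = 0 := by
    intro m hm0 hm1 hm2
    have h2' := hI2 (m : D) hm0 hm1 hm2
    rw [hfnat m, ← mul_assoc] at h2'
    rcases mul_eq_zero.mp h2' with hc | hc
    · rcases mul_eq_zero.mp hc with hc' | hc'
      · push_cast
        exact hc'
      · exact absurd hc' hm0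
    · exact absurd hc hf1
  rcases hchar with h0 | hp
  · haveI : CharP D 0 := ringChar.of_eq h0
    haveI : CharZero D := CharP.charP_to_charZero D
    have h2 := hD 2 (by norm_num) (by norm_num) (by
      intro hc
      push_cast at hc
      have h3 : (3 : D) = 0 := by
        rw [show (3 : D) = 2 + 1 by norm_num, hc]
        exact neg_add_cancel 1
      norm_num at h3)
    rw [Int.cast_eq_zero] at h2
    have hgt : ∀ k : ℕ, 3 ≤ k → (2 * 2 ^ k + 1 : ℤ) < 3 ^ k := by
      intro k hk
      induction k, hk using Nat.le_induction with
      | base => norm_num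
      | succ k hk ih =>
        have h3 : (0 : ℤ) < 3 ^ k := pow_pos (by norm_num) k
        rw [pow_succ, pow_succ]
        nlinarith
    push_cast at h2
    rw [hev.neg_one_pow] at h2
    have hgtn := hgt n hn
    nlinarith
  · set p := ringChar D with hpdef
    haveI hpC : CharP D p := ringChar.charP D
    have hprime : p.Prime := (CharP.char_is_prime_or_zero D p).resolve_right (by omega)
    haveI : Fact p.Prime := ⟨hprime⟩
    have castD_iff : ∀ t : ℤ, ((t : D) = 0 ↔ (t : ZMod p) = 0) := fun t => by
      rw [CharP.intCast_eq_zero_iff D p, ZMod.intCast_zmod_eq_zero_iff_dvd]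
    have hZ : ∀ a : ZMod p, a ≠ 0 → a ≠ 1 → a ≠ -1 →
        2 + 2 * a ^ n - (1 - a) ^ n - (1 + a) ^ n = 0 := by
      intro a ha0 ha1 ha2
      have hval : ((a.val : ℕ) : ZMod p) = a := ZMod.natCast_rightInverse a
      have key : ∀ t : ℤ, (((a.val : ℤ) - t : ℤ) : D) = 0 → a = (t : ZMod p) := by
        intro t ht
        have h1 := (castD_iff _).mp ht
        push_cast at h1
        rw [hval] at h1
        exact sub_eq_zero.mp h1
      have c0 : ((a.val : ℕ) : D) ≠ 0 := by
        intro hc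
        apply ha0
        have : (((a.val : ℤ) - 0 : ℤ) : D) = 0 := by push_cast; rw [hc]; exact sub_self _
        simpa using key 0 this
      have c1 : ((a.val : ℕ) : D) ≠ 1 := by
        intro hc
        apply ha1
        have : (((a.val : ℤ) - 1 : ℤ) : D) = 0 := by push_cast; rw [hc]; exact sub_self _
        simpa using key 1 this
      have c2 : ((a.val : ℕ) : D) ≠ -1 := by
        intro hc
        apply ha2
        have : (((a.val : ℤ) - (-1) : ℤ) : D) = 0 := by push_cast; rw [hc]; exact sub_self _
        simpa using key (-1) this
      have hDm := hD a.val c0 c1 c2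
      have hq := (castD_iff _).mp hDm
      push_cast at hq
      rw [hval] at hq
      exact hq
    rcases eq_or_ne p (n + 1) with hp1 | hp2
    · -- Fermat case: p = n + 1
      have hp5 : 5 ≤ p := by omega
      have h2 : (2 : ZMod p) ≠ 0 := by
        intro hc
        have := (ZMod.natCast_eq_zero_iff 2 p).mp (by exact_mod_cast hc)
        have := Nat.le_of_dvd (by norm_num) this
        omega
      have h3 : (3 : ZMod p) ≠ 0 := by
        intro hc
        have := (ZMod.natCast_eq_zero_iff 3 p).mp (by exact_mod_cast hc)
        have := Nat.le_of_dvd (by norm_num) this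
        omega
      have h21 : (2 : ZMod p) ≠ 1 := by
        intro hc
        have h1 : (1 : ZMod p) = 0 := by linear_combination hc
        have := (ZMod.natCast_eq_zero_iff 1 p).mp (by exact_mod_cast h1)
        have := Nat.le_of_dvd (by norm_num) this
        omega
      have h2m1 : (2 : ZMod p) ≠ -1 := by
        intro hc
        have h1 : (3 : ZMod p) = 0 := by linear_combination hc
        exact h3 h1
      have hF := hZ 2 h2 h21 h2m1
      have e2 : (2 : ZMod p) ^ n = 1 := by
        have := ZMod.pow_card_sub_one_eq_one h2
        rwa [show p - 1 = n by omega] at this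
      have e3 : (3 : ZMod p) ^ n = 1 := by
        have := ZMod.pow_card_sub_one_eq_one h3
        rwa [show p - 1 = n by omega] at this
      rw [show (1 - (2 : ZMod p)) = -1 by ring, show (1 + (2 : ZMod p)) = 3 by ring,
        e2, e3, Even.neg_one_pow ⟨j, hj⟩] at hF
      have : (2 : ZMod p) = 0 := by linear_combination hF
      exact h2 this
    · -- p ≥ n + 2 : root counting
      have hpge : n + 2 ≤ p := by omega
      classical
      set P : Polynomial (ZMod p) :=
        C 2 + C 2 * X ^ n - (1 - X) ^ n - (1 + X) ^ n with hPdef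
      have hflip : ((1 - X : (ZMod p)[X])) ^ n = (X + C (-1)) ^ n := by
        rw [map_neg, C_1, ← neg_sub (X : (ZMod p)[X]) 1, Even.neg_pow ⟨j, hj⟩, sub_eq_add_neg]
      have hroot : ∀ a : ZMod p, a ≠ 0 → a ≠ 1 → a ≠ -1 → P.IsRoot a := by
        intro a ha0 ha1 ha2
        have hz := hZ a ha0 ha1 ha2
        simp only [IsRoot, hPdef, eval_add, eval_sub, eval_mul, eval_pow, eval_C, eval_X, eval_one]
        linear_combination hz
      have hdeg : P.natDegree ≤ n - 2 := by
        rw [natDegree_le_iff_coeff_eq_zero]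
        intro N hN
        rw [hPdef, hflip]
        simp only [coeff_add, coeff_sub, coeff_C_mul, coeff_X_pow, coeff_C,
          coeff_X_add_C_pow, coeff_one_add_X_pow]
        rcases (show N = n - 1 ∨ N = n ∨ n < N by omega) with hc | hc | hc
        · have hd : n - N = 1 := by omega
          rw [if_neg (show ¬ N = n by omega), if_neg (show ¬ N = 0 by omega), hd, pow_one]
          ring
        · subst hc
          rw [if_pos rfl, if_neg (by omega : ¬ N = 0), Nat.sub_self, pow_zero,
            Nat.choose_self, Nat.cast_one]
          ring
        · rw [if_neg (by omega : ¬ N = n), if_neg (by omega : ¬ N = 0),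
            Nat.choose_eq_zero_of_lt hc, Nat.cast_zero]
          ring
      have h2p : (2 : ZMod p) ≠ 0 := by
        intro hc
        have := (ZMod.natCast_eq_zero_iff 2 p).mp (by exact_mod_cast hc)
        have := Nat.le_of_dvd (by norm_num) this
        omega
      have hch2 : 2 * n.choose 2 = n * (n - 1) := by
        rw [Nat.choose_two_right]
        exact Nat.mul_div_cancel' (dvd_mul_of_dvd_left hev.two_dvd _)
      have hchoose : ((n.choose 2 : ℕ) : ZMod p) ≠ 0 := by
        intro hc
        have hdvd := (ZMod.natCast_eq_zero_iff _ p).mp hc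
        have hdvd2 : p ∣ n * (n - 1) := by
          rw [← hch2]
          exact Dvd.dvd.mul_left hdvd 2
        rcases (Nat.Prime.dvd_mul hprime).mp hdvd2 with hd | hd
        · have := Nat.le_of_dvd (by omega) hd; omega
        · have := Nat.le_of_dvd (by omega) hd; omega
      have hc2 : P.coeff 2 = -(2 * (n.choose 2 : ZMod p)) := by
        rw [hPdef, hflip]
        simp only [coeff_add, coeff_sub, coeff_C_mul, coeff_X_pow, coeff_C,
          coeff_X_add_C_pow, coeff_one_add_X_pow]
        rw [if_neg (by omega : ¬ 2 = n), if_neg (by norm_num : ¬ 2 = 0),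
          show ((-1 : ZMod p)) ^ (n - 2) = 1 from Even.neg_one_pow ⟨j - 1, by omega⟩]
        ring
      have hPne : P ≠ 0 := by
        intro hc
        rw [hc, coeff_zero] at hc2
        have hmul : (2 : ZMod p) * (n.choose 2 : ZMod p) = 0 := by
          have := congrArg Neg.neg hc2
          simpa using this.symm
        rcases mul_eq_zero.mp hmul with hcc | hcc
        · exact h2p hcc
        · exact hchoose hcc
      have hsub : Finset.univ \ ({0, 1, -1} : Finset (ZMod p)) ⊆ P.roots.toFinset := by
        intro a ha
        rw [Multiset.mem_toFinset, mem_roots']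
        simp only [Finset.mem_sdiff, Finset.mem_insert, Finset.mem_singleton, Finset.mem_univ,
          true_and] at ha
        push_neg at ha
        exact ⟨hPne, hroot a ha.1 ha.2.1 ha.2.2⟩
      have hcard1 : p - 3 ≤ (Finset.univ \ ({0, 1, -1} : Finset (ZMod p))).card := by
        rw [Finset.card_sdiff_of_subset (Finset.subset_univ _)]
        have hcu : (Finset.univ : Finset (ZMod p)).card = p := by
          rw [Finset.card_univ, ZMod.card]
        have hle : ({0, 1, -1} : Finset (ZMod p)).card ≤ 3 := by
          apply le_trans (Finset.card_insert_le _ _)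
          have := Finset.card_insert_le (1 : ZMod p) ({-1} : Finset (ZMod p))
          simp at this ⊢
          omega
        omega
      have hcard2 : (Finset.univ \ ({0, 1, -1} : Finset (ZMod p))).card ≤ n - 2 :=
        le_trans (Finset.card_le_card hsub)
          (le_trans (Multiset.toFinset_card_le _) (le_trans P.card_roots' hdeg))
      omega

end stmt8helpers

/-- Lemma 3.2(c): `f(a²) = (−∑_{k=1}^n C(n,k)(−1)^k a^k + a^n) f(a)`. -/
theorem stmt_8 (n : ℕ) (hn : 3 ≤ n) (D : Type*) [DivisionRing D]
    (hchar : ringChar D = 0 ∨ n < ringChar D)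
    (f g : D → D)
    (hf : ∀ x y : D, f (x + y) = f x + f y)
    (hg : ∀ x y : D, g (x + y) = g x + g y)
    (h : ∀ x : D, x ≠ 0 → f x + x ^ n * g x⁻¹ = 0) :
    ∀ a : D,
      f (a ^ 2) =
        (-(∑ k ∈ Finset.Icc 1 n, (n.choose k : D) * (-1 : D) ^ k * a ^ k) + a ^ n) * f a := by
  intro a
  have h2D : (2 : D) ≠ 0 := by
    have := natCast_ne' (n := n) hchar (show 0 < 2 by norm_num) (by omega)
    exact_mod_cast this
  rcases Nat.even_or_odd n with hev | hodd
  · -- even case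
    have hI1 := fun x hx hx1 => keyI1' hf hg h x hx hx1
    have hI2 := fun x h0 h1 hm1 =>
      keyI2' hev (addf_neg' hf) hI1 x h0 h1 hm1
    have hf1 : f 1 = 0 := f_one_zero' hn hev hchar (addf_nat' hf) hI2
    have hsum : ∑ k ∈ Finset.Icc 1 n, (n.choose k : D) * (-1 : D) ^ k * a ^ k
        = (1 - a) ^ n - 1 := by
      rw [binom_sum' a]
      exact (add_sub_cancel_left 1 _).symm
    rw [hsum, neg_sub]
    rcases eq_or_ne a 0 with rfl | ha0
    · norm_num [addf_zero' hf, zero_pow (show n ≠ 0 by omega)]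
    rcases eq_or_ne a 1 with rfl | ha1
    · simp [hf1]
    · rw [hI1 a ha0 ha1, hf1, mul_zero, sub_zero, add_mul, sub_mul, one_mul]
  · -- odd case: f ≡ 0
    have hzero : ∀ x : D, f x = 0 := by
      intro x
      rcases eq_or_ne x 0 with rfl | hx
      · exact addf_zero' hf
      · have h1 := h x hx
        have h2 := h (-x) (neg_ne_zero.mpr hx)
        rw [inv_neg, addf_neg' hf, addf_neg' hg, hodd.neg_pow, neg_mul_neg] at h2
        rw [eq_neg_of_add_eq_zero_right h1] at h2
        have hsum : f x + f x = 0 := by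
          have := congrArg Neg.neg h2
          simpa using this
        have h2' : (2 : D) * f x = 0 := by rw [two_mul]; exact hsum
        rcases mul_eq_zero.mp h2' with hcc | hcc
        · exact absurd hcc h2D
        · exact hcc
    rw [hzero, hzero, mul_zero]
end

section
/- Let n ≥ 3 be an integer and let D be a division ring whose characteristic is either 0 or greater than n. If f, g : D → D are additive maps satisfying f(x) + x^n · g(x⁻¹) = 0 for all nonzero x ∈ D, then for every x ∈ D one has (2 · ∑_{j even, 2 ≤ j ≤ n−1} C(n,j) x^j) · f(x) = 0. -/
private lemma bin_aux {D : Type*} [DivisionRing D] (n : ℕ) (hn : 3 ≤ n) (x : D) :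
    2 * ∑ j ∈ (Finset.Icc 2 (n - 1)).filter (fun j => Even j), (n.choose j : D) * x ^ j
      = (1 + x) ^ n + (1 - x) ^ n - 2 - x ^ n - (-x) ^ n := by
  obtain ⟨m, rfl⟩ : ∃ m, n = m + 3 := ⟨n - 3, by omega⟩
  rw [show m + 3 - 1 = m + 2 from by omega]
  have h1 : (1 + x) ^ (m + 3) = ∑ j ∈ Finset.range (m + 4), x ^ j * ((m + 3).choose j : D) := by
    rw [show m + 4 = m + 3 + 1 from by omega, add_comm (1 : D) x]
    simpa using (Commute.one_right x).add_pow (m + 3)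
  have h2 : (1 - x) ^ (m + 3) = ∑ j ∈ Finset.range (m + 4), (-x) ^ j * ((m + 3).choose j : D) := by
    rw [show m + 4 = m + 3 + 1 from by omega, sub_eq_add_neg, add_comm (1 : D) (-x)]
    simpa using (Commute.one_right (-x)).add_pow (m + 3)
  have hG : (1 + x) ^ (m + 3) + (1 - x) ^ (m + 3)
      = ∑ j ∈ Finset.range (m + 4), (x ^ j + (-x) ^ j) * ((m + 3).choose j : D) := by
    rw [h1, h2, ← Finset.sum_add_distrib]
    exact Finset.sum_congr rfl fun j _ => (add_mul _ _ _).symm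
  have e0 : ∑ j ∈ Finset.Ico 0 2, (x ^ j + (-x) ^ j) * ((m + 3).choose j : D) = 2 := by
    rw [show Finset.Ico 0 2 = {0, 1} from by decide,
      Finset.sum_insert (by decide), Finset.sum_singleton]
    norm_num
  have e3 : ∑ j ∈ Finset.Ico (m + 3) (m + 4), (x ^ j + (-x) ^ j) * ((m + 3).choose j : D)
      = x ^ (m + 3) + (-x) ^ (m + 3) := by
    rw [show m + 4 = m + 3 + 1 from by omega, Nat.Ico_succ_singleton, Finset.sum_singleton,
      Nat.choose_self]
    simp
  have emid : ∑ j ∈ Finset.Ico 2 (m + 3), (x ^ j + (-x) ^ j) * ((m + 3).choose j : D)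
      = 2 * ∑ j ∈ (Finset.Icc 2 (m + 2)).filter (fun j => Even j),
          ((m + 3).choose j : D) * x ^ j := by
    rw [Finset.mul_sum, Finset.sum_filter,
      show Finset.Icc 2 (m + 2) = Finset.Ico 2 (m + 3) from by
        rw [show m + 3 = m + 2 + 1 from by omega, Finset.Ico_add_one_right_eq_Icc]]
    apply Finset.sum_congr rfl
    intro j hj
    by_cases hEv : Even j
    · rw [if_pos hEv, hEv.neg_pow, ← two_mul, mul_assoc,
        ← (Nat.cast_commute ((m + 3).choose j) (x ^ j)).eq]
    · rw [if_neg hEv, (Nat.not_even_iff_odd.mp hEv).neg_pow]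
      simp
  have s1 := Finset.sum_Ico_consecutive
    (f := fun j => (x ^ j + (-x) ^ j) * ((m + 3).choose j : D))
    (show (0:ℕ) ≤ 2 from by omega) (show 2 ≤ m + 3 from by omega)
  have s2 := Finset.sum_Ico_consecutive
    (f := fun j => (x ^ j + (-x) ^ j) * ((m + 3).choose j : D))
    (show (0:ℕ) ≤ m + 3 from by omega) (show m + 3 ≤ m + 4 from by omega)
  rw [hG, Finset.range_eq_Ico, ← s2, ← s1, e0, e3, emid]
  abel

/-- Key step in the proof of Theorem T1:
`(2 ∑_{j even, 2 ≤ j ≤ n−1} C(n,j) x^j) f(x) = 0` for all `x`. -/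
theorem stmt_9 (n : ℕ) (hn : 3 ≤ n) (D : Type*) [DivisionRing D]
    (hchar : ringChar D = 0 ∨ n < ringChar D)
    (f g : D → D)
    (hf : ∀ x y : D, f (x + y) = f x + f y)
    (hg : ∀ x y : D, g (x + y) = g x + g y)
    (h : ∀ x : D, x ≠ 0 → f x + x ^ n * g x⁻¹ = 0) :
    ∀ x : D,
      (2 * ∑ j ∈ (Finset.Icc 2 (n - 1)).filter (fun j => Even j),
        (n.choose j : D) * x ^ j) * f x = 0 := by
  classical
  -- basic consequences of additivity
  have f0 : f 0 = 0 := by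
    have h0 := hf 0 0
    rw [add_zero] at h0
    exact right_eq_add.mp h0
  have fneg : ∀ y : D, f (-y) = -f y := by
    intro y
    have h1 := hf y (-y)
    rw [add_neg_cancel, f0] at h1
    exact eq_neg_of_add_eq_zero_right h1.symm
  have hfsub : ∀ u v : D, f (u - v) = f u - f v := by
    intro u v
    rw [sub_eq_add_neg, hf, fneg, ← sub_eq_add_neg]
  -- 2 ≠ 0 in D
  have two_ne : (2 : D) ≠ 0 := by
    have hcp : CharP D (ringChar D) := ringChar.charP D
    have h2 : ((2 : ℕ) : D) = (2 : D) := by norm_num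
    rw [← h2, Ne, CharP.cast_eq_zero_iff D (ringChar D) 2]
    rcases hchar with h0 | hlt
    · rw [h0]
      intro hd
      have := Nat.eq_zero_of_zero_dvd hd
      omega
    · intro hd
      have hle := Nat.le_of_dvd (by omega) hd
      omega
  have two_ne_one : (2 : D) ≠ 1 := by
    intro hc
    rw [show (2 : D) = 1 + 1 from one_add_one_eq_two.symm] at hc
    exact one_ne_zero (add_eq_left.mp hc)
  -- the key multiplicative/additive identity
  have K : ∀ y : D, y ≠ 0 → y ≠ 1 →
      f (y * (1 - y)) = (1 - y) ^ n * f y + y ^ n * f (1 - y) := by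
    intro y hy0 hy1
    have hz0 : (1 : D) - y ≠ 0 := sub_ne_zero.mpr (Ne.symm hy1)
    have hyz : y * (1 - y) ≠ 0 := mul_ne_zero hy0 hz0
    have hcomm : Commute y (1 - y) := ((Commute.one_right y).sub_right (Commute.refl y))
    have hinv : (y * (1 - y))⁻¹ = y⁻¹ + (1 - y)⁻¹ := by
      apply inv_eq_of_mul_eq_one_right
      rw [mul_add]
      have t1 : y * (1 - y) * y⁻¹ = 1 - y := by
        rw [hcomm.eq, mul_assoc, mul_inv_cancel₀ hy0, mul_one]
      have t2 : y * (1 - y) * (1 - y)⁻¹ = y := by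
        rw [mul_assoc, mul_inv_cancel₀ hz0, mul_one]
      rw [t1, t2, sub_add_cancel]
    have hgy : y ^ n * g y⁻¹ = -f y := eq_neg_of_add_eq_zero_right (h y hy0)
    have hgz : (1 - y) ^ n * g (1 - y)⁻¹ = -f (1 - y) :=
      eq_neg_of_add_eq_zero_right (h (1 - y) hz0)
    have hpow : (y * (1 - y)) ^ n = y ^ n * (1 - y) ^ n := hcomm.mul_pow n
    have p1 : (y * (1 - y)) ^ n * g y⁻¹ = -((1 - y) ^ n * f y) := by
      rw [hpow, (hcomm.pow_pow n n).eq, mul_assoc, hgy, mul_neg]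
    have p2 : (y * (1 - y)) ^ n * g (1 - y)⁻¹ = -(y ^ n * f (1 - y)) := by
      rw [hpow, mul_assoc, hgz, mul_neg]
    have hh := h (y * (1 - y)) hyz
    rw [hinv, hg y⁻¹ (1 - y)⁻¹, mul_add, p1, p2] at hh
    rw [← sub_eq_zero, ← hh]
    abel
  -- evaluate K at y = 2
  have hf2 : f 2 = f 1 + f 1 := by
    rw [show (2 : D) = 1 + 1 from one_add_one_eq_two.symm, hf]
  have K2 := K 2 two_ne two_ne_one
  rw [show (2 : D) * (1 - 2) = -2 from by norm_num,
    show (1 : D) - 2 = -1 from by norm_num, fneg 2, fneg 1, hf2] at K2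
  -- K2 : -(f 1 + f 1) = (-1) ^ n * (f 1 + f 1) + 2 ^ n * -f 1
  -- the central relation for generic x
  have key : ∀ y : D, y ≠ 0 → y ≠ 1 → y ≠ -1 →
      ((1 + y) ^ n + (1 - y) ^ n - 2 - y ^ n - (-y) ^ n) * f y
        = ((-y) ^ n - y ^ n) * f 1 := by
    intro y hy0 hy1 hym1
    have E1 := K y hy0 hy1
    rw [mul_one_sub, hfsub, hfsub] at E1
    -- E1 : f y - f (y * y) = (1 - y) ^ n * f y + y ^ n * (f 1 - f y)
    have hmy1 : -y ≠ 1 := fun hc => hym1 (neg_eq_iff_eq_neg.mp hc)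
    have E2 := K (-y) (neg_ne_zero.mpr hy0) hmy1
    rw [sub_neg_eq_add, neg_mul, mul_one_add, fneg, hf y (y * y), fneg y, hf 1 y] at E2
    -- E2 : -(f y + f (y * y)) = (1 + y) ^ n * -f y + (-y) ^ n * (f 1 + f y)
    have e1 : (f y - f (y * y)) - ((1 - y) ^ n * f y + y ^ n * (f 1 - f y)) = 0 :=
      sub_eq_zero_of_eq E1
    have e2 : (-(f y + f (y * y))) - ((1 + y) ^ n * -f y + (-y) ^ n * (f 1 + f y)) = 0 :=
      sub_eq_zero_of_eq E2
    have haux : ∀ P Q R N A F F2 : D,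
        (Q + P - 2 - R - N) * F - (N - R) * A
          = ((-(F + F2)) - (Q * -F + N * (A + F)))
            - ((F - F2) - (P * F + R * (A - F))) := by
      intros; noncomm_ring
    have hcomb := haux ((1 - y) ^ n) ((1 + y) ^ n) (y ^ n) ((-y) ^ n) (f 1) (f y) (f (y * y))
    rw [e1, e2] at hcomb
    rw [← sub_eq_zero, hcomb, sub_zero]
  intro x
  by_cases hx0 : x = 0
  · subst hx0
    have hzero : ∑ j ∈ (Finset.Icc 2 (n - 1)).filter (fun j => Even j),
        (n.choose j : D) * (0 : D) ^ j = 0 := by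
      apply Finset.sum_eq_zero
      intro j hj
      rw [Finset.mem_filter, Finset.mem_Icc] at hj
      rw [zero_pow (by omega : j ≠ 0), mul_zero]
    rw [hzero, mul_zero, zero_mul]
  rcases Nat.even_or_odd n with hev | hodd
  · -- n even
    rw [hev.neg_one_pow, one_mul, mul_neg] at K2
    -- K2 : -(f 1 + f 1) = (f 1 + f 1) + -(2 ^ n * f 1)
    have haux4 : ∀ t u : D, t - 4 * u = (-(u + u)) - ((u + u) + -t) := by
      intros; noncomm_ring
    have HAe : (2 : D) ^ n * f 1 = 4 * f 1 :=
      sub_eq_zero.mp ((haux4 ((2 : D) ^ n * f 1) (f 1)).trans (sub_eq_zero_of_eq K2))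
    by_cases hx1 : x = 1
    · subst hx1
      rw [bin_aux n hn 1, one_add_one_eq_two, sub_self, zero_pow (by omega : n ≠ 0),
        one_pow, hev.neg_one_pow]
      rw [show ((2 : D) ^ n + 0 - 2 - 1 - 1) * f 1 = (2 : D) ^ n * f 1 - 4 * f 1 from by
        noncomm_ring, HAe, sub_self]
    by_cases hxm1 : x = -1
    · subst hxm1
      rw [bin_aux n hn (-1), fneg 1, add_neg_cancel, sub_neg_eq_add, one_add_one_eq_two,
        neg_neg, zero_pow (by omega : n ≠ 0), one_pow, hev.neg_one_pow]
      rw [show ((0 : D) + 2 ^ n - 2 - 1 - 1) * -f 1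
          = -((2 : D) ^ n * f 1 - 4 * f 1) from by noncomm_ring,
        HAe, sub_self, neg_zero]
    · rw [bin_aux n hn x, key x hx0 hx1 hxm1, hev.neg_pow, sub_self, zero_mul]
  · -- n odd
    rw [hodd.neg_one_pow, neg_mul, one_mul] at K2
    -- K2 : -(f 1 + f 1) = -(f 1 + f 1) + 2 ^ n * -f 1
    have h0 : (2 : D) ^ n * -f 1 = 0 := (left_eq_add.mp K2)
    have ha0 : f 1 = 0 := by
      have := (mul_eq_zero.mp h0).resolve_left (pow_ne_zero n two_ne)
      exact neg_eq_zero.mp this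
    by_cases hx1 : x = 1
    · subst hx1
      rw [ha0, mul_zero]
    by_cases hxm1 : x = -1
    · subst hxm1
      rw [fneg 1, ha0, neg_zero, mul_zero]
    · rw [bin_aux n hn x, key x hx0 hx1 hxm1, ha0, mul_zero]
end

section
/- Let n ≥ 3 be an integer, let D be a division ring whose characteristic is either 0 or greater than n, and let R = M_m(D) with m ≥ 2. Suppose f, g : R → R are additive maps satisfying f(X) + X^n · g(X⁻¹) = 0 for every invertible X ∈ R. Then for every X ∈ R such that both X and X + I are invertible, f(X²) = (∑_{k=1}^{n−1} C(n,k) X^k) · f(X) and g(X²) = (∑_{k=1}^{n−1} C(n,k) X^k) · g(X). -/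
set_option maxHeartbeats 1000000

section AuxStmt11

variable {m : ℕ} {D : Type*} [DivisionRing D]

private lemma natCast_mat_stmt11 (c : ℕ) :
    ((c : ℕ) : Matrix (Fin m) (Fin m) D) = (c : D) • (1 : Matrix (Fin m) (Fin m) D) := by
  rw [Nat.cast_smul_eq_nsmul, nsmul_eq_mul, mul_one]

private lemma isUnit_natCast_mat_stmt11 (c : ℕ) (hc : (c : D) ≠ 0) :
    IsUnit ((c : ℕ) : Matrix (Fin m) (Fin m) D) := by
  rw [natCast_mat_stmt11]
  have key : ∀ u v : D, (u • (1 : Matrix (Fin m) (Fin m) D)) * (v • 1) = (u * v) • 1 :=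
    fun u v => by rw [Matrix.smul_mul, one_mul, smul_smul]
  exact ⟨⟨(c : D) • 1, (c : D)⁻¹ • 1,
    by rw [key, mul_inv_cancel₀ hc, one_smul],
    by rw [key, inv_mul_cancel₀ hc, one_smul]⟩, rfl⟩

private lemma relA_stmt11 (n : ℕ)
    (f g : Matrix (Fin m) (Fin m) D → Matrix (Fin m) (Fin m) D)
    (hf : ∀ X Y, f (X + Y) = f X + f Y) (hg : ∀ X Y, g (X + Y) = g X + g Y)
    (h : ∀ X : (Matrix (Fin m) (Fin m) D)ˣ,
      f (Units.val X) + (Units.val X) ^ n * g (Units.val X⁻¹) = 0) :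
    ∀ X : Matrix (Fin m) (Fin m) D, IsUnit X → IsUnit (X + 1) →
      f (X ^ 2) + f X + X ^ n * f 1 = (X + 1) ^ n * f X - X ^ n * f X := by
  intro X hX hX1
  have hgsub : ∀ A B, g (A - B) = g A - g B := (AddMonoidHom.mk' g hg).map_sub
  have rel : ∀ x : (Matrix (Fin m) (Fin m) D)ˣ,
      f (Units.val x) = -((Units.val x) ^ n * g (Units.val x⁻¹)) :=
    fun x => eq_neg_of_add_eq_zero_left (h x)
  have hcXX1 : Commute X (X + 1) := Commute.add_right (Commute.refl X) (Commute.one_right X)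
  set x := hX.unit with hxdef
  set y := hX1.unit with hydef
  have hx : Units.val x = X := hX.unit_spec
  have hy : Units.val y = X + 1 := hX1.unit_spec
  have hcom : Units.val x * Units.val y = Units.val y * Units.val x := by rw [hx, hy]; exact hcXX1
  have hswap : X ^ n * (X + 1) ^ n = (X + 1) ^ n * X ^ n := (hcXX1.pow_pow n n)
  have hxyinv : (Units.val (x * y)⁻¹) = Units.val x⁻¹ - Units.val y⁻¹ := by
    apply Units.inv_eq_of_mul_eq_one_left
    rw [Units.val_mul, sub_mul, ← mul_assoc, Units.inv_mul, one_mul]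
    rw [hcom, ← mul_assoc, Units.inv_mul, one_mul, hx, hy, add_sub_cancel_left]
  have e1 := rel (x * y)
  rw [hxyinv, hgsub, Units.val_mul, hx, hy] at e1
  have hXXpow : (X * (X + 1)) ^ n = X ^ n * (X + 1) ^ n := hcXX1.mul_pow n
  have hXX : X * (X + 1) = X ^ 2 + X := by noncomm_ring
  rw [hXXpow, hXX, hf] at e1
  have hx' : X ^ n * g (Units.val x⁻¹) = -f X := by
    have hr := rel x; rw [hx] at hr; rw [hr, neg_neg]
  have hy' : (X + 1) ^ n * g (Units.val y⁻¹) = -(f X + f 1) := by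
    have hr := rel y; rw [hy, hf] at hr; rw [hr, neg_neg]
  have expand : X ^ n * (X + 1) ^ n * (g (Units.val x⁻¹) - g (Units.val y⁻¹))
      = (X + 1) ^ n * -f X - X ^ n * -(f X + f 1) := by
    have t1 : X ^ n * (X + 1) ^ n * g (Units.val x⁻¹) = (X + 1) ^ n * -f X := by
      rw [hswap, mul_assoc, hx']
    have t2 : X ^ n * (X + 1) ^ n * g (Units.val y⁻¹) = X ^ n * -(f X + f 1) := by
      rw [mul_assoc, hy']
    rw [mul_sub, t1, t2]
  rw [expand] at e1
  rw [e1]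
  simp only [mul_neg, mul_add, neg_sub, neg_neg, sub_neg_eq_add]
  abel

private lemma binom_stmt11 (n : ℕ) (hn2 : 2 ≤ n) (X : Matrix (Fin m) (Fin m) D) :
    (∑ k ∈ Finset.Icc 1 (n - 1), n.choose k • X ^ k) = (X + 1) ^ n - X ^ n - 1 := by
  have hb' : (X + 1) ^ n = ∑ k ∈ Finset.range (n + 1), n.choose k • X ^ k := by
    rw [(Commute.one_right X).add_pow n]
    refine Finset.sum_congr rfl fun k _ => ?_
    rw [one_pow, mul_one, nsmul_eq_mul, (Nat.cast_commute (n.choose k) (X ^ k)).eq]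
  have hset : Finset.range (n + 1) = insert 0 (insert n (Finset.Icc 1 (n - 1))) := by
    ext k
    simp only [Finset.mem_range, Finset.mem_insert, Finset.mem_Icc]
    omega
  rw [hset, Finset.sum_insert (by simp only [Finset.mem_insert, Finset.mem_Icc]; omega),
    Finset.sum_insert (by simp only [Finset.mem_Icc]; omega)] at hb'
  rw [pow_zero, Nat.choose_zero_right, Nat.choose_self, one_smul, one_smul] at hb'
  rw [hb']
  abel

private lemma fone_stmt11 (n : ℕ) (hn : 3 ≤ n)
    (hchar : ringChar D = 0 ∨ n < ringChar D)
    (f g : Matrix (Fin m) (Fin m) D → Matrix (Fin m) (Fin m) D)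
    (hf : ∀ X Y, f (X + Y) = f X + f Y) (hg : ∀ X Y, g (X + Y) = g X + g Y)
    (h : ∀ X : (Matrix (Fin m) (Fin m) D)ˣ,
      f (Units.val X) + (Units.val X) ^ n * g (Units.val X⁻¹) = 0) :
    f 1 = 0 := by
  by_contra ha
  obtain ⟨i, j, hd⟩ : ∃ i j, f 1 i j ≠ 0 := by
    by_contra hno
    push_neg at hno
    exact ha (Matrix.ext fun i j => by rw [hno, Matrix.zero_apply])
  have hfn : ∀ (k : ℕ) (x : Matrix (Fin m) (Fin m) D), f (k • x) = k • f x :=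
    fun k x => (AddMonoidHom.mk' f hf).map_nsmul k x
  have key : ∀ c : ℕ, (c : D) ≠ 0 → ((c + 1 : ℕ) : D) ≠ 0 →
      ((c ^ 2 + c + c ^ n + c ^ n * c : ℕ) : D) = (((c + 1) ^ n * c : ℕ) : D) := by
    intro c hc hc1
    have hX : IsUnit ((c : ℕ) : Matrix (Fin m) (Fin m) D) := isUnit_natCast_mat_stmt11 c hc
    have hadd : ((c : ℕ) : Matrix (Fin m) (Fin m) D) + 1 = ((c + 1 : ℕ) : Matrix (Fin m) (Fin m) D) := by
      rw [Nat.cast_add, Nat.cast_one]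
    have hX1 : IsUnit (((c : ℕ) : Matrix (Fin m) (Fin m) D) + 1) := by
      rw [hadd]; exact isUnit_natCast_mat_stmt11 (c + 1) hc1
    have E := relA_stmt11 n f g hf hg h _ hX hX1
    rw [hadd] at E
    rw [← Nat.cast_pow c 2, ← Nat.cast_pow c n, ← Nat.cast_pow (c + 1) n] at E
    have hfc : ∀ k : ℕ, f ((k : ℕ) : Matrix (Fin m) (Fin m) D) = k • f 1 := by
      intro k
      rw [show ((k : ℕ) : Matrix (Fin m) (Fin m) D) = k • (1 : Matrix (Fin m) (Fin m) D) by
        rw [nsmul_eq_mul, mul_one], hfn]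
    rw [hfc, hfc, ← nsmul_eq_mul, ← nsmul_eq_mul, ← nsmul_eq_mul, smul_smul, smul_smul,
      eq_sub_iff_add_eq, ← add_smul, ← add_smul, ← add_smul] at E
    have E2 : ((c ^ 2 + c + c ^ n + c ^ n * c) • f 1) i j = (((c + 1) ^ n * c) • f 1) i j := by
      rw [E]
    rw [Matrix.smul_apply, Matrix.smul_apply, nsmul_eq_mul, nsmul_eq_mul] at E2
    exact mul_right_cancel₀ hd E2
  obtain ⟨k, rfl⟩ : ∃ k, n = 3 + k := ⟨n - 3, by omega⟩
  rcases hchar with h0 | hp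
  · haveI : CharP D 0 := h0 ▸ ringChar.charP D
    haveI : CharZero D := CharP.charP_to_charZero D
    have h1 := key 1 (by norm_num) (by norm_num)
    rw [Nat.cast_inj] at h1
    have e4 : 1 ^ 2 + 1 + 1 ^ (3 + k) + 1 ^ (3 + k) * 1 = 4 := by norm_num
    have e2 : (1 + 1) ^ (3 + k) * 1 = 2 ^ (3 + k) := by norm_num
    rw [e4, e2] at h1
    have h8 : 2 ^ 3 ≤ 2 ^ (3 + k) := Nat.pow_le_pow_right (by norm_num) (by omega)
    norm_num at h8
    omega
  · set p := ringChar D with hpdef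
    haveI : CharP D p := ringChar.charP D
    have hp' : p.Prime := by
      rcases CharP.char_is_prime_or_zero D p with hq | hq
      · exact hq
      · omega
    haveI : Fact p.Prime := ⟨hp'⟩
    have step : ∀ c : ℕ, 1 ≤ c → c + 2 ≤ p →
        ((c : ZMod p) + 1) ^ (k + 2) = (c : ZMod p) ^ (k + 2) + 1 := by
      intro c hc1 hc2
      have hcD : (c : D) ≠ 0 := by
        rw [Ne, CharP.cast_eq_zero_iff D p]
        intro hdvd
        have := Nat.le_of_dvd (by omega) hdvd
        omega
      have hc1D : ((c + 1 : ℕ) : D) ≠ 0 := by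
        rw [Ne, CharP.cast_eq_zero_iff D p]
        intro hdvd
        have := Nat.le_of_dvd (by omega) hdvd
        omega
      have hk2 := key c hcD hc1D
      have hz : ((c ^ 2 + c + c ^ (3 + k) + c ^ (3 + k) * c : ℕ) : ZMod p)
          = (((c + 1) ^ (3 + k) * c : ℕ) : ZMod p) :=
        (ZMod.natCast_eq_natCast_iff _ _ _).mpr ((CharP.natCast_eq_natCast D p).mp hk2)
      push_cast at hz
      have hx : (c : ZMod p) ≠ 0 := by
        rw [Ne, ZMod.natCast_eq_zero_iff]
        intro hdvd
        have := Nat.le_of_dvd (by omega) hdvd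
        omega
      have hx1 : (c : ZMod p) + 1 ≠ 0 := by
        have h1 : ((c + 1 : ℕ) : ZMod p) ≠ 0 := by
          rw [Ne, ZMod.natCast_eq_zero_iff]
          intro hdvd
          have := Nat.le_of_dvd (by omega) hdvd
          omega
        push_cast at h1
        exact h1
      have hcc : (c : ZMod p) * ((c : ZMod p) + 1) ≠ 0 := mul_ne_zero hx hx1
      exact mul_left_cancel₀ hcc (by linear_combination -hz)
    have ind : ∀ c : ℕ, 1 ≤ c → c ≤ p - 1 → (c : ZMod p) ^ (k + 2) = (c : ZMod p) := by
      intro c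
      induction c with
      | zero => intro hc _; omega
      | succ c ih =>
        intro _ hcp
        rcases Nat.eq_zero_or_pos c with hc0 | hc0
        · subst hc0; norm_num
        · have hs := step c (by omega) (by omega)
          push_cast
          rw [hs, ih (by omega) (by omega)]
    have all : ∀ x : ZMod p, x ≠ 0 → x ^ (k + 2) = x := by
      intro x hx
      have hval : ((x.val : ℕ) : ZMod p) = x := ZMod.natCast_rightInverse x
      have h1 : 1 ≤ x.val := by
        rcases Nat.eq_zero_or_pos x.val with h0 | h0
        · exact absurd ((ZMod.val_eq_zero x).mp h0) hx
        · exact h0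
      have h2 : x.val ≤ p - 1 := by have := ZMod.val_lt x; omega
      rw [← hval]
      exact ind x.val h1 h2
    obtain ⟨g0, hg0⟩ := IsCyclic.exists_generator (α := (ZMod p)ˣ)
    have hgv : ((g0 : ZMod p)) ^ (k + 2) = (g0 : ZMod p) := all _ (Units.ne_zero g0)
    have hg1 : g0 ^ (k + 1) = 1 := by
      have hgu : g0 ^ (k + 2) = g0 := by
        ext
        rw [Units.val_pow_eq_pow_val]
        exact hgv
      have h2 : g0 ^ (k + 1) * g0 = 1 * g0 := by rw [← pow_succ, hgu, one_mul]
      exact mul_right_cancel h2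
    have hdvd : orderOf g0 ∣ k + 1 := orderOf_dvd_of_pow_eq_one hg1
    have hord : orderOf g0 = p - 1 := by
      rw [orderOf_eq_card_of_forall_mem_zpowers hg0, Nat.card_eq_fintype_card, ZMod.card_units]
    rw [hord] at hdvd
    have := Nat.le_of_dvd (by omega) hdvd
    omega

end AuxStmt11

/-- Step 1: for `X` with `X` and `X + I` invertible,
`f(X²) = (∑_{k=1}^{n−1} C(n,k) X^k) f(X)` and likewise for `g`. -/
theorem stmt_11 (n m : ℕ) (hn : 3 ≤ n) (hm : 2 ≤ m) (D : Type*) [DivisionRing D]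
    (hchar : ringChar D = 0 ∨ n < ringChar D)
    (f g : Matrix (Fin m) (Fin m) D → Matrix (Fin m) (Fin m) D)
    (hf : ∀ X Y, f (X + Y) = f X + f Y)
    (hg : ∀ X Y, g (X + Y) = g X + g Y)
    (h : ∀ X : (Matrix (Fin m) (Fin m) D)ˣ,
      f (Units.val X) + (Units.val X) ^ n * g (Units.val X⁻¹) = 0) :
    ∀ X : Matrix (Fin m) (Fin m) D, IsUnit X → IsUnit (X + 1) →
      f (X ^ 2) = (∑ k ∈ Finset.Icc 1 (n - 1), n.choose k • X ^ k) * f X ∧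
      g (X ^ 2) = (∑ k ∈ Finset.Icc 1 (n - 1), n.choose k • X ^ k) * g X := by
  intro X hX hX1
  have h' : ∀ Y : (Matrix (Fin m) (Fin m) D)ˣ,
      g (Units.val Y) + (Units.val Y) ^ n * f (Units.val Y⁻¹) = 0 := by
    intro Y
    have hx := h Y⁻¹
    rw [inv_inv] at hx
    have hone : (Units.val Y) ^ n * (Units.val Y⁻¹) ^ n = 1 := by
      rw [← Units.val_pow_eq_pow_val, ← Units.val_pow_eq_pow_val, inv_pow, Units.mul_inv]
    have hmul := congrArg (fun M => (Units.val Y) ^ n * M) hx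
    simp only [mul_add, mul_zero, ← mul_assoc, hone, one_mul] at hmul
    rw [add_comm]
    exact hmul
  have hf1 : f 1 = 0 := fone_stmt11 n hn hchar f g hf hg h
  have hg1 : g 1 = 0 := fone_stmt11 n hn hchar g f hg hf h'
  constructor
  · have hA := relA_stmt11 n f g hf hg h X hX hX1
    rw [hf1, mul_zero, add_zero] at hA
    rw [binom_stmt11 n (by omega) X, sub_mul, sub_mul, one_mul, eq_sub_iff_add_eq]
    exact hA
  · have hA := relA_stmt11 n g f hg hf h' X hX hX1
    rw [hg1, mul_zero, add_zero] at hA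
    rw [binom_stmt11 n (by omega) X, sub_mul, sub_mul, one_mul, eq_sub_iff_add_eq]
    exact hA
end

section
/- Let n ≥ 3 be an integer, let D be a division ring whose characteristic is either 0 or greater than n, and let R = M_m(D) with m ≥ 2. Suppose f, g : R → R are additive maps satisfying f(X) + X^n · g(X⁻¹) = 0 for every invertible X ∈ R. Then for every idempotent matrix X ∈ R (X² = X), one has 3 · f(X) = (∑_{k=1}^{2n} C(2n,k)) · X · f(X) and 3 · g(X) = (∑_{k=1}^{2n} C(2n,k)) · X · g(X). -/
section Aux
variable {m : ℕ} {D : Type*} [DivisionRing D]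


/-- multiplication by a central scalar commutes past a matrix product -/
lemma central_mul_smul (c : D) (hc : ∀ y : D, c * y = y * c)
    (A B : Matrix (Fin m) (Fin m) D) : A * (c • B) = c • (A * B) := by
  ext i j
  simp only [Matrix.mul_apply, Matrix.smul_apply, smul_eq_mul, Finset.mul_sum]
  refine Finset.sum_congr rfl fun k _ => ?_
  rw [← mul_assoc, ← hc (A i k), mul_assoc]

lemma pow_one_add_smul (c : D) (hc : ∀ y : D, c * y = y * c)
    (X : Matrix (Fin m) (Fin m) D) (hX : X * X = X) (k : ℕ) :
    (1 + c • X) ^ k = 1 + ((1 + c) ^ k - 1) • X := by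
  induction k with
  | zero => simp
  | succ k ih =>
    rw [pow_succ, ih]
    have expand : (1 + ((1 + c) ^ k - 1) • X) * (1 + c • X)
        = 1 + c • X + ((1 + c) ^ k - 1) • X + ((1 + c) ^ k - 1) • (X * (c • X)) := by
      rw [add_mul, one_mul, mul_add, mul_one, smul_mul_assoc]
      abel
    rw [expand, central_mul_smul c hc X X, hX, smul_smul]
    have hsc : c + (((1 + c) ^ k - 1) + ((1 + c) ^ k - 1) * c) = (1 + c) ^ (k+1) - 1 := by
      rw [sub_mul, one_mul, pow_succ, mul_add, mul_one]
      abel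
    rw [add_assoc, add_assoc, ← add_smul, ← add_smul, hsc]

lemma smul_cancel (z : ℤ) (hz : (z : D) ≠ 0) (A : Matrix (Fin m) (Fin m) D)
    (h : z • A = 0) : A = 0 := by
  have h2 : (z : D) • A = 0 := by rw [Int.cast_smul_eq_zsmul]; exact h
  have := congrArg (fun B => (z : D)⁻¹ • B) h2
  simpa [inv_smul_smul₀ hz] using this

lemma lagrange_elim {M : Type*} [AddCommGroup M] (N : ℕ) (x : ℕ → ℤ) (c : ℕ → M)
    (h : ∀ j < N, (∑ k ∈ Finset.range N, x k ^ j • c k) = 0) (k₀ : ℕ) (hk₀ : k₀ < N) :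
    (∏ l ∈ (Finset.range N).erase k₀, (x k₀ - x l)) • c k₀ = 0 := by
  classical
  set P : Polynomial ℤ := ∏ l ∈ (Finset.range N).erase k₀, (Polynomial.X - Polynomial.C (x l))
    with hP
  have hmem : k₀ ∈ Finset.range N := Finset.mem_range.mpr hk₀
  have hmonic : P.Monic :=
    Polynomial.monic_prod_of_monic _ _ (fun l _ => Polynomial.monic_X_sub_C _)
  have hdeg : P.natDegree < N := by
    have : P.natDegree = ((Finset.range N).erase k₀).card := by
      rw [hP, Polynomial.natDegree_prod_of_monic _ _ (fun l _ => Polynomial.monic_X_sub_C _)]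
      rw [Finset.sum_congr rfl fun l _ => Polynomial.natDegree_X_sub_C (x l)]
      simp
    rw [this, Finset.card_erase_of_mem hmem, Finset.card_range]
    omega
  have keval : ∀ l ∈ (Finset.range N).erase k₀, P.eval (x l) = 0 := by
    intro l hl
    rw [hP, Polynomial.eval_prod]
    exact Finset.prod_eq_zero hl (by simp)
  have key : (∑ j ∈ Finset.range N, P.coeff j • (∑ k ∈ Finset.range N, x k ^ j • c k))
      = P.eval (x k₀) • c k₀ := by
    have step1 : (∑ j ∈ Finset.range N, P.coeff j • (∑ k ∈ Finset.range N, x k ^ j • c k))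
        = ∑ k ∈ Finset.range N, P.eval (x k) • c k := by
      simp only [Finset.smul_sum]
      rw [Finset.sum_comm]
      refine Finset.sum_congr rfl fun k _ => ?_
      rw [Polynomial.eval_eq_sum_range' hdeg, Finset.sum_smul]
      refine Finset.sum_congr rfl fun j _ => ?_
      rw [smul_smul]
    rw [step1]
    refine Finset.sum_eq_single_of_mem k₀ hmem fun l hl hne => ?_
    rw [keval l (Finset.mem_erase.mpr ⟨hne, hl⟩), zero_smul]
  have hzero : (∑ j ∈ Finset.range N, P.coeff j • (∑ k ∈ Finset.range N, x k ^ j • c k)) = 0 := by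
    refine Finset.sum_eq_zero fun j hj => ?_
    rw [h j (Finset.mem_range.mp hj), smul_zero]
  have heval : P.eval (x k₀) = ∏ l ∈ (Finset.range N).erase k₀, (x k₀ - x l) := by
    rw [hP, Polynomial.eval_prod]; simp
  rw [← heval, ← key, hzero]

lemma cast_prod_ne_zero (S : Finset ℕ) (y : ℕ → ℤ)
    (hy : ∀ l ∈ S, ((y l : ℤ) : D) ≠ 0) : (((∏ l ∈ S, y l : ℤ)) : D) ≠ 0 := by
  classical
  induction S using Finset.induction_on with
  | empty => simp
  | insert a s hnotmem ih =>
    rw [Finset.prod_insert hnotmem]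
    push_cast
    exact mul_ne_zero (hy a (Finset.mem_insert_self a s))
      (ih fun l hl => hy l (Finset.mem_insert_of_mem hl))

lemma rawE (n : ℕ) (f g : Matrix (Fin m) (Fin m) D → Matrix (Fin m) (Fin m) D)
    (hf : ∀ X Y, f (X + Y) = f X + f Y)
    (hg : ∀ X Y, g (X + Y) = g X + g Y)
    (h : ∀ X : (Matrix (Fin m) (Fin m) D)ˣ,
      f (Units.val X) + (Units.val X) ^ n * g (Units.val X⁻¹) = 0)
    (X : Matrix (Fin m) (Fin m) D) (hX : X * X = X)
    (t : ℤ) (ht : (t : D) ≠ 0) :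
    t • f 1 + (t*(t-1)) • f X + t • g 1 + (1-t) • g X + (t^(n+1)-t) • (X * g 1)
      + (t^n + t - t^(n+1) - 1) • (X * g X) = 0 := by
  set F' : _ →+ _ := AddMonoidHom.mk' f hf with hF'
  set G' : _ →+ _ := AddMonoidHom.mk' g hg with hG'
  set σ : D := ((t - 1 : ℤ) : D) with hσ
  set c : D := σ * (t : D)⁻¹ with hcdef
  have hσcen : ∀ y : D, σ * y = y * σ := fun y => (Int.cast_commute _ y).eq
  have hccen : ∀ y : D, c * y = y * c := fun y =>
    ((Int.cast_commute (t-1 : ℤ) y).mul_left ((Int.cast_commute t y).inv_left₀)).symm.eq.symm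
  have hts : (1 : D) + σ = (t : D) := by rw [hσ]; push_cast; abel
  have hc2 : (t : D) * c = σ := by
    rw [hcdef, ← mul_assoc, ← ((Int.cast_commute (t-1:ℤ) ((t:ℤ):D)).eq), mul_assoc,
      mul_inv_cancel₀ ht, mul_one]
  have hc1 : c + σ * c = σ := by
    rw [← one_add_mul, hts, hc2]
  -- the unit 1 + σ • X
  have e1 : (σ • X) * (c • X) = (σ * c) • X := by
    rw [smul_mul_assoc, central_mul_smul c hccen, hX, smul_smul]
  have e2 : (c • X) * (σ • X) = (σ * c) • X := by
    rw [smul_mul_assoc, central_mul_smul σ hσcen, hX, smul_smul, ← hccen σ]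
  have val_inv : (1 + σ • X) * (1 - c • X) = 1 := by
    rw [add_mul, one_mul, mul_sub, mul_one, e1]
    have : c • X + (σ * c) • X = σ • X := by rw [← add_smul, hc1]
    calc (1 : Matrix (Fin m) (Fin m) D) - c • X + (σ • X - (σ*c) • X)
        = 1 + (σ • X - (c • X + (σ*c) • X)) := by abel
      _ = 1 := by rw [this]; simp
  have inv_val : (1 - c • X) * (1 + σ • X) = 1 := by
    rw [sub_mul, one_mul, mul_add, mul_one, e2]
    have : c • X + (σ * c) • X = σ • X := by rw [← add_smul, hc1]
    calc (1 : Matrix (Fin m) (Fin m) D) + σ • X - (c • X + (σ*c) • X)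
        = 1 + (σ • X - (c • X + (σ*c) • X)) := by abel
      _ = 1 := by rw [this]; simp
  set U : (Matrix (Fin m) (Fin m) D)ˣ := ⟨1 + σ • X, 1 - c • X, val_inv, inv_val⟩ with hU
  have hUval : Units.val U = 1 + σ • X := rfl
  have hUinv : Units.val U⁻¹ = 1 - c • X := rfl
  have hid := h U
  rw [hUval, hUinv] at hid
  -- expand the pieces
  have hσs : σ • X = (t - 1 : ℤ) • X := Int.cast_smul_eq_zsmul D _ X
  have hfval : f (1 + σ • X) = f 1 + (t - 1 : ℤ) • f X := by
    rw [hσs, show f = ⇑F' from rfl, F'.map_add, F'.map_zsmul]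
  have hgval : g (1 - c • X) = g 1 - g (c • X) := by
    rw [show g = ⇑G' from rfl, G'.map_sub]
  have hgc : t • g (c • X) = (t - 1 : ℤ) • g X := by
    rw [show g = ⇑G' from rfl, ← G'.map_zsmul, ← Int.cast_smul_eq_zsmul D t (c • X),
      smul_smul, hc2, Int.cast_smul_eq_zsmul D _ X, G'.map_zsmul]
  have hpow : (1 + σ • X) ^ n = 1 + ((t^n - 1 : ℤ) : D) • X := by
    rw [pow_one_add_smul σ hσcen X hX n, hts]
    norm_cast
  set w : D := ((t^n - 1 : ℤ) : D) with hw
  have hBmul : ∀ v : Matrix (Fin m) (Fin m) D,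
      (1 + w • X) * v = v + (t^n - 1 : ℤ) • (X * v) := fun v => by
    rw [add_mul, one_mul, smul_mul_assoc, hw, Int.cast_smul_eq_zsmul]
  have key : t • (f (1 + σ • X) + (1 + σ • X) ^ n * g (1 - c • X))
      = t • f 1 + (t*(t-1)) • f X + t • g 1 + (1-t) • g X + (t^(n+1)-t) • (X * g 1)
        + (t^n + t - t^(n+1) - 1) • (X * g X) := by
    rw [hfval, hpow, hgval, smul_add, ← mul_smul_comm t, smul_sub, hgc, hBmul,
      mul_sub, mul_smul_comm, mul_smul_comm]
    module
  rw [hid, smul_zero] at key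
  exact key.symm
lemma exists_r (n : ℕ) (hn : 3 ≤ n) (hchar : ringChar D = 0 ∨ n < ringChar D) :
    ∃ r : ℤ, (∀ j : ℕ, ((r ^ j : ℤ) : D) ≠ 0) ∧
      (∀ a b : ℕ, a < b → b - a ≤ n - 1 → ((r ^ a - r ^ b : ℤ) : D) ≠ 0) := by
  rcases hchar with hc0 | hcp
  · -- characteristic zero
    haveI : CharP D 0 := hc0 ▸ ringChar.charP D
    haveI : CharZero D := CharP.charP_to_charZero D
    refine ⟨2, fun j => ?_, fun a b hab _ => ?_⟩
    · exact Int.cast_ne_zero.mpr (pow_ne_zero _ two_ne_zero)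
    · refine Int.cast_ne_zero.mpr (sub_ne_zero.mpr (ne_of_lt ?_))
      exact pow_lt_pow_right₀ (by norm_num) hab
  · -- characteristic p > n
    set p := ringChar D with hpdef
    haveI hDp : CharP D p := ringChar.charP D
    have hp : p.Prime := by
      rcases CharP.char_is_prime_or_zero D p with h | h
      · exact h
      · omega
    haveI := Fact.mk hp
    obtain ⟨γ, hγ⟩ := IsCyclic.exists_generator (α := (ZMod p)ˣ)
    have horder : orderOf γ = p - 1 := by
      rw [orderOf_eq_card_of_forall_mem_zpowers hγ, Nat.card_eq_fintype_card, ZMod.card_units]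
    set r : ℤ := ((γ : ZMod p).val : ℤ) with hrdef
    have hrz : ((r : ℤ) : ZMod p) = (γ : ZMod p) := by
      rw [hrdef]; push_cast
      simp [ZMod.natCast_val, ZMod.cast_id]
    have hcast : ∀ z : ℤ, ((z : ℤ) : D) = 0 ↔ ((z : ℤ) : ZMod p) = 0 := fun z => by
      rw [CharP.intCast_eq_zero_iff D p, ZMod.intCast_zmod_eq_zero_iff_dvd]
    refine ⟨r, fun j => ?_, fun a b hab hd => ?_⟩
    · intro h0
      rw [hcast] at h0
      push_cast at h0
      rw [hrz] at h0
      exact (pow_ne_zero j (Units.ne_zero γ)) h0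
    · intro h0
      rw [hcast] at h0
      push_cast at h0
      rw [hrz, sub_eq_zero] at h0
      have hunits : γ ^ a = γ ^ b := Units.ext (by push_cast; exact h0)
      have hmod : a ≡ b [MOD p - 1] := by
        rw [← horder]; exact pow_eq_pow_iff_modEq.mp hunits
      have hdvd : (p - 1) ∣ (b - a) := (Nat.modEq_iff_dvd' hab.le).mp hmod
      have h1 : p - 1 ≤ b - a := Nat.le_of_dvd (by omega) hdvd
      omega

lemma step1 {m : ℕ} (n : ℕ) (hn : 3 ≤ n)
    (hchar : ringChar D = 0 ∨ n < ringChar D)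
    (f g : Matrix (Fin m) (Fin m) D → Matrix (Fin m) (Fin m) D)
    (hf : ∀ X Y, f (X + Y) = f X + f Y)
    (hg : ∀ X Y, g (X + Y) = g X + g Y)
    (h : ∀ X : (Matrix (Fin m) (Fin m) D)ˣ,
      f (Units.val X) + (Units.val X) ^ n * g (Units.val X⁻¹) = 0) :
    ∀ X : Matrix (Fin m) (Fin m) D, X * X = X → f X = 0 := by
  intro X hX
  have hab : f 1 + g 1 = 0 := by
    have h1 := rawE n f g hf hg h X hX 1 (by simp)
    simpa using h1
  have eform : ∀ t : ℤ, (t : D) ≠ 0 →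
      (g X - X * g X) + t • (-(f X) - g X - X * g 1 + X * g X) + t^2 • f X
        + t^n • (X * g X) + t^(n+1) • (X * g 1 - X * g X) = 0 := by
    intro t ht
    have h1 := rawE n f g hf hg h X hX t ht
    have comb : (g X - X * g X) + t • (-(f X) - g X - X * g 1 + X * g X) + t^2 • f X
        + t^n • (X * g X) + t^(n+1) • (X * g 1 - X * g X)
        = (t • f 1 + (t*(t-1)) • f X + t • g 1 + (1-t) • g X + (t^(n+1)-t) • (X * g 1)
          + (t^n + t - t^(n+1) - 1) • (X * g X)) - t • (f 1 + g 1) := by module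
    rw [comb, h1, hab, smul_zero, sub_zero]
  obtain ⟨r, hr1, hr2⟩ := exists_r (D := D) n hn hchar
  have flip : ∀ z : ℤ, ((z : ℤ) : D) ≠ 0 → ((-z : ℤ) : D) ≠ 0 := fun z hz h0 =>
    hz (by rwa [Int.cast_neg, neg_eq_zero] at h0)
  set cc : ℕ → Matrix (Fin m) (Fin m) D := fun k =>
    if k = 0 then (g X - X * g X) else if k = 1 then (-(f X) - g X - X * g 1 + X * g X)
    else if k = 2 then f X else if k = 3 then X * g X else (X * g 1 - X * g X) with hcc
  set x : ℕ → ℤ := fun k =>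
    if k = 0 then 1 else if k = 1 then r else if k = 2 then r^2 else if k = 3 then r^n
    else r^(n+1) with hx
  have hsys : ∀ j < 5, (∑ k ∈ Finset.range 5, x k ^ j • cc k) = 0 := by
    intro j hj
    have hef := eform (r ^ j) (hr1 j)
    rw [Finset.sum_range_succ, Finset.sum_range_succ, Finset.sum_range_succ,
      Finset.sum_range_succ, Finset.sum_range_succ, Finset.sum_range_zero, zero_add]
    show (1:ℤ)^j • (g X - X * g X) + r^j • (-(f X) - g X - X * g 1 + X * g X)
      + (r^2)^j • f X + (r^n)^j • (X * g X) + (r^(n+1))^j • (X * g 1 - X * g X) = 0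
    rw [one_pow, one_smul, pow_right_comm r 2 j, pow_right_comm r n j, pow_right_comm r (n+1) j]
    exact hef
  have hext := lagrange_elim 5 x cc hsys 2 (by norm_num)
  have hccf : cc 2 = f X := rfl
  rw [hccf] at hext
  refine smul_cancel _ ?_ (f X) hext
  apply cast_prod_ne_zero
  intro l hl
  have hl5 : l < 5 := Finset.mem_range.mp (Finset.mem_of_mem_erase hl)
  have hl2 : l ≠ 2 := Finset.ne_of_mem_erase hl
  have hx2 : x 2 = r^2 := by simp [hx]
  interval_cases l
  · have h02 := hr2 0 2 (by norm_num) (by omega)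
    have heq : x 2 - x 0 = -(r^0 - r^2) := by show r^2 - 1 = -(r^0 - r^2); ring
    rw [heq]; exact flip _ h02
  · have h12 := hr2 1 2 (by norm_num) (by omega)
    have heq : x 2 - x 1 = -(r^1 - r^2) := by show r^2 - r = -(r^1 - r^2); ring
    rw [heq]; exact flip _ h12
  · exact absurd rfl hl2
  · have h2n := hr2 2 n (by omega) (by omega)
    have heq : x 2 - x 3 = r^2 - r^n := rfl
    rw [heq]; exact h2n
  · have h2n := hr2 2 (n+1) (by omega) (by omega)
    have heq : x 2 - x 4 = r^2 - r^(n+1) := rfl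
    rw [heq]; exact h2n

end Aux

/-- Step 2: for every idempotent `X`,
`3 f(X) = (∑_{k=1}^{2n} C(2n,k)) X f(X)` and likewise for `g`. -/
theorem stmt_12 (n m : ℕ) (hn : 3 ≤ n) (hm : 2 ≤ m) (D : Type*) [DivisionRing D]
    (hchar : ringChar D = 0 ∨ n < ringChar D)
    (f g : Matrix (Fin m) (Fin m) D → Matrix (Fin m) (Fin m) D)
    (hf : ∀ X Y, f (X + Y) = f X + f Y)
    (hg : ∀ X Y, g (X + Y) = g X + g Y)
    (h : ∀ X : (Matrix (Fin m) (Fin m) D)ˣ,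
      f (Units.val X) + (Units.val X) ^ n * g (Units.val X⁻¹) = 0) :
    ∀ X : Matrix (Fin m) (Fin m) D, X ^ 2 = X →
      3 • f X = (∑ k ∈ Finset.Icc 1 (2 * n), (2 * n).choose k) • (X * f X) ∧
      3 • g X = (∑ k ∈ Finset.Icc 1 (2 * n), (2 * n).choose k) • (X * g X) := by
  intro X hX2
  rw [pow_two] at hX2
  have hfX : f X = 0 := step1 n hn hchar f g hf hg h X hX2
  have hf1 : f 1 = 0 := step1 n hn hchar f g hf hg h 1 (by simp)
  have hg1 : g 1 = 0 := by
    have h1 := h 1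
    simp only [Units.val_one, inv_one, one_pow, one_mul, hf1, zero_add] at h1
    exact h1
  have h2 : (2 : D) ≠ 0 := by
    rcases hchar with hc0 | hcp
    · haveI : CharP D 0 := hc0 ▸ ringChar.charP D
      haveI : CharZero D := CharP.charP_to_charZero D
      exact two_ne_zero
    · intro h0
      have : ((2 : ℕ) : D) = 0 := by exact_mod_cast h0
      have hdvd := (CharP.cast_eq_zero_iff D (ringChar D) 2).mp this
      have := Nat.le_of_dvd (by norm_num) hdvd
      omega
  -- the unit 1 + X
  set c : D := (2 : D)⁻¹ with hcdef
  have hccen : ∀ y : D, c * y = y * c := fun y =>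
    (((Nat.cast_commute 2 y).inv_left₀ : Commute ((2:D))⁻¹ y)).eq
  have h2c : (2 : D) * c = 1 := mul_inv_cancel₀ h2
  have hXc : X * (c • X) = c • X := by rw [central_mul_smul c hccen, hX2]
  have hcc : c • X + c • X = X := by
    rw [← add_smul]
    have : c + c = 1 := by rw [← two_mul, h2c]
    rw [this, one_smul]
  have val_inv : (1 + X) * (1 - c • X) = 1 := by
    rw [add_mul, one_mul, mul_sub, mul_one, hXc]
    calc (1 : Matrix (Fin m) (Fin m) D) - c • X + (X - c • X)
        = 1 + (X - (c • X + c • X)) := by abel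
      _ = 1 := by rw [hcc]; simp
  have inv_val : (1 - c • X) * (1 + X) = 1 := by
    rw [sub_mul, one_mul, mul_add, mul_one, smul_mul_assoc, hX2]
    calc (1 : Matrix (Fin m) (Fin m) D) + X - (c • X + c • X)
        = 1 + (X - (c • X + c • X)) := by abel
      _ = 1 := by rw [hcc]; simp
  set U : (Matrix (Fin m) (Fin m) D)ˣ := ⟨1 + X, 1 - c • X, val_inv, inv_val⟩ with hU
  have hid := h U
  have hUval : Units.val U = 1 + X := rfl
  have hUinv : Units.val U⁻¹ = 1 - c • X := rfl
  rw [hUval, hUinv, hf 1 X, hf1, hfX, add_zero, zero_add] at hid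
  have hUn : (1 + X) ^ n = Units.val (U ^ n) := by rw [Units.val_pow_eq_pow_val, hUval]
  rw [hUn] at hid
  have hginv : g (1 - c • X) = 0 := (Units.mul_right_eq_zero (U ^ n)).mp hid
  set G' : _ →+ _ := AddMonoidHom.mk' g hg with hG'
  have hgc : g (c • X) = 0 := by
    have : g (1 - c • X) = g 1 - g (c • X) := by
      rw [show g = ⇑G' from rfl, G'.map_sub]
    rw [hginv, hg1] at this
    have := this.symm
    simpa using this
  have hgX : g X = 0 := by
    have hX2smul : (2 : ℤ) • (c • X) = X := by
      rw [← Int.cast_smul_eq_zsmul D, smul_smul]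
      push_cast
      rw [h2c, one_smul]
    calc g X = g ((2 : ℤ) • (c • X)) := by rw [hX2smul]
      _ = (2 : ℤ) • g (c • X) := by rw [show g = ⇑G' from rfl, G'.map_zsmul]
      _ = 0 := by rw [hgc, smul_zero]
  rw [hfX, hgX]
  constructor <;> simp
end

section
/- Let n ≥ 3 be an integer, let D be a division ring whose characteristic is either 0 or greater than n, and let R = M_m(D) with m ≥ 2. Suppose f, g : R → R are additive maps satisfying f(X) + X^n · g(X⁻¹) = 0 for every invertible X ∈ R. Then f(E_ii) = 0 and g(E_ii) = 0 for every i with 1 ≤ i ≤ m. -/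
namespace Stmt13Aux

open Matrix

variable {m : ℕ} {D : Type*} [DivisionRing D]

local notation "Mat" => Matrix (Fin m) (Fin m) D

lemma central_mul_smul {α : D} (hα : ∀ d : D, Commute α d) (M N : Mat) :
    M * (α • N) = α • (M * N) := by
  ext r c
  simp only [Matrix.mul_apply, Matrix.smul_apply, smul_eq_mul, Finset.mul_sum]
  exact Finset.sum_congr rfl fun k _ => by
    rw [← mul_assoc, ← (hα (M r k)).eq, mul_assoc]

/-- the matrix `α•1 + β•E_ii` -/
def dd (i : Fin m) (α β : D) : Mat :=
  α • (1 : Mat) + β • Matrix.single i i (1 : D)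

lemma E_mul_E (i : Fin m) :
    Matrix.single i i (1 : D) * Matrix.single i i (1 : D) = Matrix.single i i (1 : D) := by
  rw [Matrix.single_mul_single_same, one_mul]

lemma dd_mul (i : Fin m) {α' β' : D} (hα' : ∀ d : D, Commute α' d) (hβ' : ∀ d : D, Commute β' d)
    (α β : D) :
    dd i α β * dd i α' β' = dd i (α * α') (α * β' + β * α' + β * β') := by
  simp only [dd, add_mul, mul_add, Matrix.smul_mul, Matrix.one_mul, Matrix.mul_one,
    central_mul_smul hα', central_mul_smul hβ', E_mul_E, smul_smul, smul_add, add_smul,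
    (hα' α).eq, (hα' β).eq, (hβ' α).eq, (hβ' β).eq]
  abel

lemma dd_pow (i : Fin m) {α β : D} (hα : ∀ d : D, Commute α d) (hβ : ∀ d : D, Commute β d)
    (j : ℕ) : dd i α β ^ j = dd i (α ^ j) ((α + β) ^ j - α ^ j) := by
  induction j with
  | zero => simp [dd]
  | succ j ih =>
      rw [pow_succ, ih, dd_mul i hα hβ,
        show α ^ j * β + ((α + β) ^ j - α ^ j) * α + ((α + β) ^ j - α ^ j) * β
            = (α + β) ^ (j + 1) - α ^ (j + 1) by rw [pow_succ, pow_succ]; noncomm_ring,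
        ← pow_succ]


lemma dd_one (i : Fin m) : dd i 1 0 = (1 : Mat) := by simp [dd]

/-- the invertible matrix `α•1 + β•E_ii`, for `α ≠ 0`, `α + β ≠ 0`, both central. -/
def ddUnit (i : Fin m) {α β : D} (hα : ∀ d : D, Commute α d) (hβ : ∀ d : D, Commute β d)
    (h1 : α ≠ 0) (h2 : α + β ≠ 0) : (Mat)ˣ where
  val := dd i α β
  inv := dd i α⁻¹ ((α + β)⁻¹ - α⁻¹)
  val_inv := by
    rw [dd_mul i (fun d => (hα d).inv_left₀)
      (fun d => (((hα d).add_left (hβ d)).inv_left₀.sub_left (hα d).inv_left₀)),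
      mul_inv_cancel₀ h1,
      show α * ((α + β)⁻¹ - α⁻¹) + β * α⁻¹ + β * ((α + β)⁻¹ - α⁻¹)
          = (α + β) * (α + β)⁻¹ - α * α⁻¹ by noncomm_ring,
      mul_inv_cancel₀ h1, mul_inv_cancel₀ h2, sub_self, dd_one]
  inv_val := by
    rw [dd_mul i hα hβ, inv_mul_cancel₀ h1,
      show α⁻¹ * β + ((α + β)⁻¹ - α⁻¹) * α + ((α + β)⁻¹ - α⁻¹) * β
          = (α + β)⁻¹ * (α + β) - α⁻¹ * α by noncomm_ring,
      inv_mul_cancel₀ h1, inv_mul_cancel₀ h2, sub_self, dd_one]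

lemma ddUnit_val (i : Fin m) {α β : D} (hα : ∀ d : D, Commute α d) (hβ : ∀ d : D, Commute β d)
    (h1 : α ≠ 0) (h2 : α + β ≠ 0) : (ddUnit i hα hβ h1 h2).val = dd i α β := rfl

lemma ddUnit_inv_val (i : Fin m) {α β : D} (hα : ∀ d : D, Commute α d) (hβ : ∀ d : D, Commute β d)
    (h1 : α ≠ 0) (h2 : α + β ≠ 0) :
    ((ddUnit i hα hβ h1 h2)⁻¹).val = dd i α⁻¹ ((α + β)⁻¹ - α⁻¹) := rfl

lemma smul_cancel {α : D} (h : α ≠ 0) {M : Mat} (hM : α • M = 0) : M = 0 := by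
  have h2 := congrArg (fun N => α⁻¹ • N) hM
  simpa [smul_smul, inv_mul_cancel₀ h] using h2


lemma exists_pow_ne_one {p : ℕ} (hp : p.Prime) {r : ℕ} (hr : 0 < r) (hrp : r < p - 1) :
    ∃ z : ZMod p, z ≠ 0 ∧ z ^ r ≠ 1 := by
  haveI : Fact p.Prime := ⟨hp⟩
  obtain ⟨gu, hgu⟩ := IsCyclic.exists_generator (α := (ZMod p)ˣ)
  refine ⟨(gu : ZMod p), Units.ne_zero gu, fun hone => ?_⟩
  have hu : gu ^ r = 1 := by
    ext
    push_cast
    exact hone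
  have hdvd : orderOf gu ∣ r := orderOf_dvd_of_pow_eq_one hu
  rw [orderOf_eq_card_of_forall_mem_zpowers hgu, Nat.card_eq_fintype_card, ZMod.card_units p] at hdvd
  exact absurd (Nat.le_of_dvd hr hdvd) (by omega)

lemma exists_scalars (n : ℕ) (hn : 3 ≤ n) (hchar : ringChar D = 0 ∨ n < ringChar D) :
    (2 : D) ≠ 0 ∧ (3 : D) ≠ 0 ∧ ∃ k : ℤ, (k : D) ≠ 0 ∧ ((k : D)) ^ (n - 2) ≠ 1 := by
  rcases hchar with h0 | hp
  · haveI : CharP D 0 := h0 ▸ ringChar.charP D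
    haveI : CharZero D := CharP.charP_to_charZero D
    refine ⟨two_ne_zero, three_ne_zero, 2, ?_, ?_⟩
    · exact_mod_cast (by norm_num : (2:ℤ) ≠ 0)
    · intro hone
      rw [show ((2:ℤ):D) ^ (n-2) = (((2^(n-2) : ℤ)):D) by push_cast; ring_nf,
        show (1:D) = ((1:ℤ):D) by norm_num] at hone
      have := Int.cast_injective (α := D) hone
      have h2 : (2:ℤ) ^ (n - 2) ≥ 2 ^ 1 := pow_le_pow_right₀ (by norm_num) (by omega)
      simp at h2
      omega
  · set p := ringChar D with hpdef
    haveI : CharP D p := ringChar.charP D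
    have hp : p.Prime := (CharP.char_is_prime_or_zero D p).resolve_right (by omega)
    haveI : Fact p.Prime := ⟨hp⟩
    have h5 : 5 ≤ p := by
      rcases Nat.lt_or_ge p 5 with h | h
      · have h4 : p = 4 := by omega
        rw [h4] at hp; norm_num at hp
      · exact h
    have hcast : ∀ j : ℕ, j ≠ 0 → j < p → (j : D) ≠ 0 := by
      intro j hj hjp hz
      have := (CharP.cast_eq_zero_iff D p j).mp hz
      have := Nat.le_of_dvd (by omega) this
      omega
    obtain ⟨z, hz0, hzpow⟩ := exists_pow_ne_one hp (r := n - 2) (by omega) (by omega)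
    refine ⟨by exact_mod_cast hcast 2 (by omega) (by omega),
      by exact_mod_cast hcast 3 (by omega) (by omega), (z.val : ℤ), ?_, ?_⟩
    · rw [Int.cast_natCast, ZMod.natCast_val, ← ZMod.castHom_apply (h := dvd_refl p)]
      intro hzero
      exact hz0 ((ZMod.castHom (dvd_refl p) D).injective (by simpa using hzero))
    · rw [Int.cast_natCast, ZMod.natCast_val, ← ZMod.castHom_apply (h := dvd_refl p),
        ← map_pow]
      intro hone
      exact hzpow ((ZMod.castHom (dvd_refl p) D).injective (by simpa using hone))


lemma combineI {t s c : D} (hts : t * s = 1) (htc : t * c = c * t)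
    (a b e : Mat)
    (heq : (t • a - a) + ((s • b - b) + ((c * s) • e - c • e)) = 0) :
    (t - 1) • (t • a - (b + c • e)) = 0 := by
  have hX := congrArg (fun M : Mat => t • M) heq
  simp only [smul_zero, smul_add, smul_sub, smul_smul] at hX
  rw [hts, one_smul, ← mul_assoc, htc, mul_assoc, hts, mul_one] at hX
  simp only [smul_sub, smul_add, smul_smul, sub_mul, one_mul, sub_smul, one_smul]
  rw [htc, ← hX]
  abel

lemma combineII {t s q c : D} (hts : t * s = 1) (htq : t * q = q * t) (htc : t * c = c * t)
    (a b e : Mat)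
    (heq : (a - t • a) + ((q • b - (q * s) • b) + (c • e - (c * s) • e)) = 0) :
    (t - 1) • (q • b + c • e - t • a) = 0 := by
  have hX := congrArg (fun M : Mat => t • M) heq
  simp only [smul_zero, smul_add, smul_sub, smul_smul] at hX
  rw [show t * (q * s) = q by rw [← mul_assoc, htq, mul_assoc, hts, mul_one],
    show t * (c * s) = c by rw [← mul_assoc, htc, mul_assoc, hts, mul_one]] at hX
  simp only [smul_sub, smul_add, smul_smul, sub_mul, one_mul, sub_smul, one_smul]
  rw [← hX]
  abel

section Main

variable {n : ℕ}

lemma main (hn : 3 ≤ n) (h2D : (2:D) ≠ 0) (h3D : (3:D) ≠ 0)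
    (k₀ : ℤ) (hk₀ : ((k₀:D)) ≠ 0) (hk₀p : ((k₀:D)) ^ (n-2) ≠ 1)
    (F G : Mat →+ Mat)
    (h : ∀ X : (Mat)ˣ, F X.val + X.val ^ n * G ((X⁻¹).val) = 0)
    (i : Fin m) :
    F (Matrix.single i i 1) = 0 ∧ G (Matrix.single i i 1) = 0 := by
  set E : Mat := Matrix.single i i 1 with hE
  -- Family S : scalar matrices
  have eqS : ∀ k : ℤ, (k:D) ≠ 0 →
      (k:D) • F 1 + ((k:D)^n * (k:D)⁻¹) • G 1 = 0 := by
    intro k hk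
    have hα : ∀ d : D, Commute ((k:D)) d := fun d => Int.cast_commute k d
    have hβ : ∀ d : D, Commute (0:D) d := fun d => Commute.zero_left d
    have h2 : (k:D) + 0 ≠ 0 := by rwa [add_zero]
    have heq := h (ddUnit i hα hβ hk h2)
    rw [ddUnit_val, ddUnit_inv_val, dd_pow i hα hβ n] at heq
    simp only [dd, add_zero, sub_self, zero_smul] at heq
    rw [map_intCast_smul F D D k (1:Mat), map_inv_intCast_smul G D D k (1:Mat),
      Matrix.smul_mul, Matrix.one_mul, smul_smul] at heq
    exact heq
  -- Step 1 : F 1 = 0 and G 1 = 0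
  have hFG1 : F (1:Mat) + G (1:Mat) = 0 := by
    have := eqS 1 (by norm_num)
    simpa using this
  have hG1 : G (1:Mat) = 0 := by
    have h1 := eqS k₀ hk₀
    have hF1 : F (1:Mat) = - G (1:Mat) := eq_neg_of_add_eq_zero_left hFG1
    rw [hF1, smul_neg, neg_add_eq_sub, sub_eq_zero] at h1
    -- h1 : ((k₀:D)^n * (k₀:D)⁻¹) • G 1 = (k₀:D) • G 1
    have h2 : (((k₀:D)^n * (k₀:D)⁻¹) - (k₀:D)) • G (1:Mat) = 0 := by
      rw [sub_smul, h1, sub_self]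
    obtain ⟨r, hr⟩ : ∃ r, n = r + 2 := ⟨n - 2, by omega⟩
    have h3 : (k₀:D)^n * (k₀:D)⁻¹ - (k₀:D) = ((k₀:D)^(n-2) - 1) * (k₀:D) := by
      rw [hr, Nat.add_sub_cancel, show r + 2 = (r + 1) + 1 from rfl, pow_succ, mul_assoc,
        mul_inv_cancel₀ hk₀, mul_one, pow_succ, sub_mul, one_mul]
    exact smul_cancel (h3 ▸ mul_ne_zero (sub_ne_zero_of_ne hk₀p) hk₀) h2
  have hF1 : F (1:Mat) = 0 := by
    have := hFG1
    rw [hG1, add_zero] at this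
    exact this
  -- Family I : units 1 + (t-1) E
  have eqI : ∀ k : ℤ, (k:D) ≠ 0 → (k:D) ≠ 1 →
      (k:D) • F E = G E + ((k:D)^n - 1) • (E * G E) := by
    intro k hk hk1
    have hα : ∀ d : D, Commute (1:D) d := fun d => Commute.one_left d
    have hβ : ∀ d : D, Commute ((k:D) - 1) d := fun d =>
      (Int.cast_commute k d).sub_left (Commute.one_left d)
    have hinv : ∀ d : D, Commute ((k:D))⁻¹ d := fun d => (Int.cast_commute k d).inv_left₀
    have hsum : (1:D) + ((k:D) - 1) = (k:D) := by abel
    have h2 : (1:D) + ((k:D) - 1) ≠ 0 := by rwa [hsum]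
    have heq := h (ddUnit i hα hβ one_ne_zero h2)
    rw [ddUnit_val, ddUnit_inv_val, dd_pow i hα hβ n, hsum, inv_one, one_pow] at heq
    simp only [dd, one_smul] at heq
    rw [← hE] at heq
    have hFarg : F (1 + ((k:D) - 1) • E) = (k:D) • F E - F E := by
      rw [map_add, hF1, zero_add, sub_smul, one_smul, map_sub, map_intCast_smul F D D]
    have hGarg : G (1 + ((k:D)⁻¹ - 1) • E) = (k:D)⁻¹ • G E - G E := by
      rw [map_add, hG1, zero_add, sub_smul, one_smul, map_sub, map_inv_intCast_smul G D D]
    have hprod : (1 + ((k:D)^n - 1) • E) * ((k:D)⁻¹ • G E - G E)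
        = ((k:D)⁻¹ • G E - G E)
          + ((((k:D)^n - 1) * (k:D)⁻¹) • (E * G E) - ((k:D)^n - 1) • (E * G E)) := by
      rw [add_mul, Matrix.one_mul, Matrix.smul_mul, mul_sub, central_mul_smul hinv,
        smul_sub, smul_smul]
    rw [hFarg, hGarg, hprod] at heq
    -- heq : (k•FE - FE) + ((k⁻¹•GE - GE) + (((k^n-1)*k⁻¹)•(E*GE) - (k^n-1)•(E*GE))) = 0
    have hz := combineI (mul_inv_cancel₀ hk)
      (((Commute.refl ((k:D))).pow_right n).sub_right (Commute.one_right _)).eq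
      (F E) (G E) (E * G E) heq
    have := smul_cancel (sub_ne_zero_of_ne hk1) hz
    rwa [sub_eq_zero] at this
  -- Family II : units t•1 + (1-t) E
  have eqII : ∀ k : ℤ, (k:D) ≠ 0 → (k:D) ≠ 1 →
      (k:D)^n • G E + (1 - (k:D)^n) • (E * G E) = (k:D) • F E := by
    intro k hk hk1
    have hα : ∀ d : D, Commute ((k:D)) d := fun d => Int.cast_commute k d
    have hβ : ∀ d : D, Commute (1 - (k:D)) d := fun d =>
      (Commute.one_left d).sub_left (Int.cast_commute k d)
    have hinv : ∀ d : D, Commute ((k:D))⁻¹ d := fun d => (Int.cast_commute k d).inv_left₀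
    have hsum : (k:D) + (1 - (k:D)) = 1 := by abel
    have h2 : (k:D) + (1 - (k:D)) ≠ 0 := by rw [hsum]; exact one_ne_zero
    have heq := h (ddUnit i hα hβ hk h2)
    rw [ddUnit_val, ddUnit_inv_val, dd_pow i hα hβ n, hsum, inv_one, one_pow] at heq
    simp only [dd] at heq
    rw [← hE] at heq
    have hFarg : F ((k:D) • (1:Mat) + (1 - (k:D)) • E) = F E - (k:D) • F E := by
      rw [map_add, map_intCast_smul F D D, hF1, smul_zero, zero_add, sub_smul, one_smul,
        map_sub, map_intCast_smul F D D]
    have hGarg : G ((k:D)⁻¹ • (1:Mat) + (1 - (k:D)⁻¹) • E) = G E - (k:D)⁻¹ • G E := by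
      rw [map_add, map_inv_intCast_smul G D D, hG1, smul_zero, zero_add, sub_smul, one_smul,
        map_sub, map_inv_intCast_smul G D D]
    have hprod : ((k:D)^n • (1:Mat) + (1 - (k:D)^n) • E) * (G E - (k:D)⁻¹ • G E)
        = ((k:D)^n • G E - ((k:D)^n * (k:D)⁻¹) • G E)
          + ((1 - (k:D)^n) • (E * G E) - ((1 - (k:D)^n) * (k:D)⁻¹) • (E * G E)) := by
      rw [add_mul, Matrix.smul_mul, Matrix.one_mul, Matrix.smul_mul, mul_sub,
        central_mul_smul hinv, smul_sub, smul_sub, smul_smul, smul_smul]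
    rw [hFarg, hGarg, hprod] at heq
    have hz := combineII (mul_inv_cancel₀ hk)
      ((Commute.refl ((k:D))).pow_right n).eq
      ((Commute.one_right ((k:D))).sub_right ((Commute.refl ((k:D))).pow_right n)).eq
      (F E) (G E) (E * G E) heq
    have := smul_cancel (sub_ne_zero_of_ne hk1) hz
    rwa [sub_eq_zero] at this
  -- endgame
  have hEE : E * E = E := by rw [hE]; exact E_mul_E i
  have step : ∀ k : ℤ, (k:D) ≠ 0 → (k:D) ≠ 1 → (k:D)^n ≠ 1 →
      F E = 0 ∧ G E = 0 := by
    intro k hk hk1 hkn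
    have hI := eqI k hk hk1
    have hII := eqII k hk hk1
    have key : ((k:D)^n - 1) • (G E - (E * G E + E * G E)) = 0 := by
      calc ((k:D)^n - 1) • (G E - (E * G E + E * G E))
          = ((k:D)^n • G E + (1 - (k:D)^n) • (E * G E))
            - (G E + ((k:D)^n - 1) • (E * G E)) := by
            simp only [smul_sub, smul_add, sub_smul, one_smul]; abel
        _ = (k:D) • F E - (k:D) • F E := by rw [hII, ← hI]
        _ = 0 := sub_self _
    have hb := smul_cancel (sub_ne_zero_of_ne hkn) key
    rw [sub_eq_zero] at hb
    have he : E * G E = 0 := by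
      have h5 : E * G E = E * G E + E * G E := by
        conv_lhs => rw [hb]
        rw [mul_add, ← Matrix.mul_assoc, hEE]
      exact add_eq_left.mp h5.symm
    have hbz : G E = 0 := by rw [hb, he, add_zero]
    have haz : F E = 0 := by
      apply smul_cancel hk
      rw [hI, he, smul_zero, add_zero, hbz]
    exact ⟨haz, hbz⟩
  have h21 : (2:D) ≠ 1 := fun hh =>
    one_ne_zero (α := D) (by rw [show (1:D) = 2 - 1 by norm_num, hh, sub_self])
  have h31 : (3:D) ≠ 1 := fun hh =>
    h2D (by rw [show (2:D) = 3 - 1 by norm_num, hh, sub_self])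
  have c2 : ((2:ℤ):D) = 2 := by norm_num
  have c3 : ((3:ℤ):D) = 3 := by norm_num
  by_cases h2n : (2:D)^n = 1
  · by_cases h3n : (3:D)^n = 1
    · have hI2 := eqI 2 (by rw [c2]; exact h2D) (by rw [c2]; exact h21)
      have hI3 := eqI 3 (by rw [c3]; exact h3D) (by rw [c3]; exact h31)
      rw [c2, h2n, sub_self, zero_smul, add_zero] at hI2
      rw [c3, h3n, sub_self, zero_smul, add_zero] at hI3
      have haz : F E = 0 := by
        have hd : ((3:D) - 2) • F E = 0 := by rw [sub_smul, hI3, hI2, sub_self]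
        rwa [show (3:D) - 2 = 1 by norm_num, one_smul] at hd
      refine ⟨haz, ?_⟩
      rw [← hI2, haz, smul_zero]
    · exact step 3 (by rw [c3]; exact h3D) (by rw [c3]; exact h31) (by rw [c3]; exact h3n)
  · exact step 2 (by rw [c2]; exact h2D) (by rw [c2]; exact h21) (by rw [c2]; exact h2n)

end Main

end Stmt13Aux


/-- Step 2 (consequence): `f(E_ii) = 0 = g(E_ii)` for every `i`. -/
theorem stmt_13 (n m : ℕ) (hn : 3 ≤ n) (hm : 2 ≤ m) (D : Type*) [DivisionRing D]
    (hchar : ringChar D = 0 ∨ n < ringChar D)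
    (f g : Matrix (Fin m) (Fin m) D → Matrix (Fin m) (Fin m) D)
    (hf : ∀ X Y, f (X + Y) = f X + f Y)
    (hg : ∀ X Y, g (X + Y) = g X + g Y)
    (h : ∀ X : (Matrix (Fin m) (Fin m) D)ˣ,
      f (Units.val X) + (Units.val X) ^ n * g (Units.val X⁻¹) = 0) :
    ∀ i : Fin m, f (Matrix.single i i 1) = 0 ∧ g (Matrix.single i i 1) = 0 := by
  obtain ⟨h2D, h3D, k₀, hk₀, hk₀p⟩ := Stmt13Aux.exists_scalars (D := D) n hn hchar
  intro i
  exact Stmt13Aux.main hn h2D h3D k₀ hk₀ hk₀p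
    (AddMonoidHom.mk' f hf) (AddMonoidHom.mk' g hg) h i
end

section
/- Let n ≥ 3 be an integer, let D be a division ring whose characteristic is either 0 or greater than n, and let R = M_m(D) with m ≥ 2. Suppose f, g : R → R are additive maps satisfying f(X) + X^n · g(X⁻¹) = 0 for every invertible X ∈ R. Then for every X ∈ R with X² = 0, one has X · f(X) = 0 and X · g(X) = 0. -/
private lemma aux_unit_left {R : Type*} [Ring R] (a : R) (h : a * a = 0) :
    (1 + a) * (1 - a) = 1 := by
  have e : (1 + a) * (1 - a) = 1 - a * a := by noncomm_ring
  rw [e, h, sub_zero]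

private lemma aux_unit_right {R : Type*} [Ring R] (a : R) (h : a * a = 0) :
    (1 - a) * (1 + a) = 1 := by
  have e : (1 - a) * (1 + a) = 1 - a * a := by noncomm_ring
  rw [e, h, sub_zero]

private lemma aux_pow {R : Type*} [Ring R] (a : R) (h : a * a = 0) (k : ℕ) :
    (1 + a) ^ k = 1 + (k : ℤ) • a := by
  induction k with
  | zero => simp
  | succ k ih =>
    rw [pow_succ, ih, add_mul, one_mul, smul_mul_assoc, mul_add, mul_one, h, add_zero]
    push_cast [add_smul, one_smul]
    abel

/-- Step 3: for every square-zero `X`, `X f(X) = 0 = X g(X)`. -/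
theorem stmt_14 (n m : ℕ) (hn : 3 ≤ n) (hm : 2 ≤ m) (D : Type*) [DivisionRing D]
    (hchar : ringChar D = 0 ∨ n < ringChar D)
    (f g : Matrix (Fin m) (Fin m) D → Matrix (Fin m) (Fin m) D)
    (hf : ∀ X Y, f (X + Y) = f X + f Y)
    (hg : ∀ X Y, g (X + Y) = g X + g Y)
    (h : ∀ X : (Matrix (Fin m) (Fin m) D)ˣ,
      f (Units.val X) + (Units.val X) ^ n * g (Units.val X⁻¹) = 0) :
    ∀ X : Matrix (Fin m) (Fin m) D, X ^ 2 = 0 →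
      X * f X = 0 ∧ X * g X = 0 := by
  -- characteristic facts
  have hcast : ∀ k : ℕ, 0 < k → k ≤ n → (k : D) ≠ 0 := by
    intro k hk hkn hzero
    have hdvd : ringChar D ∣ k := (ringChar.spec D k).mp hzero
    rcases hchar with h0 | hlt
    · rw [h0] at hdvd
      have := zero_dvd_iff.mp hdvd
      omega
    · have := Nat.le_of_dvd hk hdvd
      omega
  let F : Matrix (Fin m) (Fin m) D →+ Matrix (Fin m) (Fin m) D := AddMonoidHom.mk' f hf
  let G : Matrix (Fin m) (Fin m) D →+ Matrix (Fin m) (Fin m) D := AddMonoidHom.mk' g hg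
  intro X hX2
  rw [pow_two] at hX2
  have hsq : ∀ t : ℤ, (t • X) * (t • X) = 0 := by
    intro t
    rw [smul_mul_assoc, mul_smul_comm, hX2, smul_zero, smul_zero]
  -- the units 1 + t • X
  let u : ℤ → (Matrix (Fin m) (Fin m) D)ˣ := fun t =>
    ⟨1 + t • X, 1 - t • X, aux_unit_left _ (hsq t), aux_unit_right _ (hsq t)⟩
  -- the main family of equations
  have E : ∀ t : ℤ,
      (f 1 + g 1) + t • (f X - g X) + ((n : ℤ) * t) • (X * g 1)
        - ((n : ℤ) * t * t) • (X * g X) = 0 := by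
    intro t
    have H0 := h (u t)
    have hv : (Units.val (u t)) = 1 + t • X := rfl
    have hiv : (Units.val (u t)⁻¹) = 1 - t • X := rfl
    rw [hv, hiv, aux_pow _ (hsq t) n, smul_smul] at H0
    have hfa : f (1 + t • X) = f 1 + t • f X := by
      have : F (1 + t • X) = F 1 + t • F X := by rw [map_add, map_zsmul]
      exact this
    have hga : g (1 - t • X) = g 1 - t • g X := by
      have : G (1 - t • X) = G 1 - t • G X := by rw [map_sub, map_zsmul]
      exact this
    rw [hfa, hga] at H0
    have expand : f 1 + t • f X + (1 + ((n : ℤ) * t) • X) * (g 1 - t • g X)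
        = (f 1 + g 1) + t • (f X - g X) + ((n : ℤ) * t) • (X * g 1)
          - ((n : ℤ) * t * t) • (X * g X) := by
      rw [add_mul, one_mul, smul_mul_assoc, mul_sub, mul_smul_comm, smul_sub, smul_smul]
      module
    rw [expand] at H0
    exact H0
  -- t = 0 gives f 1 + g 1 = 0
  have e0 : f 1 + g 1 = 0 := by
    have H0 := h 1
    simpa using H0
  -- derive (2n) • (X * g X) = 0
  have hz : ((2 : ℤ) * (n : ℤ)) • (X * g X) = 0 := by
    have hh : ((2 : ℤ) * (n : ℤ)) • (X * g X) =
        (2 : ℤ) • ((f 1 + g 1) + (1 : ℤ) • (f X - g X) + ((n : ℤ) * 1) • (X * g 1)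
          - ((n : ℤ) * 1 * 1) • (X * g X))
        - ((f 1 + g 1) + (2 : ℤ) • (f X - g X) + ((n : ℤ) * 2) • (X * g 1)
          - ((n : ℤ) * 2 * 2) • (X * g X))
        - (f 1 + g 1) := by module
    rw [hh, E 1, E 2, e0]
    simp
  have hne : (((2 : ℤ) * (n : ℤ) : ℤ) : D) ≠ 0 := by
    push_cast
    exact mul_ne_zero (hcast 2 (by omega) (by omega)) (hcast n (by omega) le_rfl)
  have hd0 : (X * g X) = 0 := by
    have h' : ((((2 : ℤ) * (n : ℤ) : ℤ) : D)) • (X * g X) = 0 := by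
      rw [Int.cast_smul_eq_zsmul]
      exact hz
    have h2 := congrArg (fun y => ((((2 : ℤ) * (n : ℤ) : ℤ) : D))⁻¹ • y) h'
    simp only [smul_smul, inv_mul_cancel₀ hne, one_smul, smul_zero] at h2
    exact h2
  refine ⟨?_, hd0⟩
  -- now extract X * f X = 0 from E 1
  have e1 := E 1
  rw [e0, hd0] at e1
  simp only [smul_zero, sub_zero, zero_add, one_smul, mul_one] at e1
  -- e1 : f X - g X + (n : ℤ) • (X * g 1) = 0
  have := congrArg (fun y => X * y) e1
  simp only [mul_add, mul_sub, mul_smul_comm, mul_zero, ← mul_assoc, hX2, zero_mul,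
    smul_zero, add_zero, hd0, sub_zero] at this
  exact this
end

section
/- Let n ≥ 3 be an integer, let D be a division ring whose characteristic is either 0 or greater than n, and let R = M_m(D) with m ≥ 2. Suppose f, g : R → R are additive maps satisfying f(X) + X^n · g(X⁻¹) = 0 for every invertible X ∈ R. Then for all α, β ∈ D with α ≠ 0 and α ≠ −1, and all indices i ≠ j, one has f((αβ + βα) E_ij) = (∑_{k=1}^{n−1} C(n,k) α^k) · f(β E_ij) and g((αβ + βα) E_ij) = (∑_{k=1}^{n−1} C(n,k) α^k) · g(β E_ij), where an element c ∈ D acts on a matrix by left multiplication by the scalar matrix cI. -/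
open Matrix Finset

namespace Stmt15Aux




variable {m : ℕ} {D : Type*} [DivisionRing D]

lemma smul_cancel {c : D} (hc : c ≠ 0) {M : Matrix (Fin m) (Fin m) D} (h : c • M = 0) :
    M = 0 := by
  have : (c⁻¹ * c) • M = 0 := by rw [mul_smul, h, smul_zero]
  rwa [inv_mul_cancel₀ hc, one_smul] at this

lemma half_cancel (h2 : (2:D) ≠ 0) {M : Matrix (Fin m) (Fin m) D} (h : M + M = 0) :
    M = 0 := by
  apply smul_cancel h2
  have : ((1:D) + 1) • M = M + M := by rw [add_smul, one_smul]
  rw [show (2:D) = 1 + 1 by norm_num, this, h]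

lemma stdBasis_diag_mul_apply (k : Fin m) (d : D) (M : Matrix (Fin m) (Fin m) D) (r c : Fin m) :
    (single k k d * M) r c = if r = k then d * M k c else 0 := by
  rw [Matrix.mul_apply]
  by_cases hr : r = k
  · subst hr
    rw [Finset.sum_eq_single r]
    · simp [single]
    · intro b _ hb; simp [single, hb, Ne.symm hb]
    · intro hb; exact absurd (Finset.mem_univ r) hb
  · rw [if_neg hr]
    apply Finset.sum_eq_zero
    intro l _
    simp [single, Ne.symm hr, hr]

lemma rows_zero {M : Matrix (Fin m) (Fin m) D} {k : Fin m}
    (hk : single k k (1:D) * M = 0) : ∀ c, M k c = 0 := by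
  intro c
  have := congrFun (congrFun hk k) c
  rwa [stdBasis_diag_mul_apply, if_pos rfl, one_mul, Matrix.zero_apply] at this

lemma diag_mul_of_rows {M : Matrix (Fin m) (Fin m) D} {i : Fin m}
    (hM : ∀ r, r ≠ i → ∀ c, M r c = 0) (c : D) :
    single i i c * M = c • M := by
  ext r col
  rw [stdBasis_diag_mul_apply]
  by_cases hr : r = i
  · subst hr; simp
  · rw [if_neg hr, Matrix.smul_apply, hM r hr col, smul_zero]




variable {D : Type*} [DivisionRing D]

lemma smul_cancelV {V : Type*} [AddCommGroup V] [Module D V] {c : D} (hc : c ≠ 0) {M : V}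
    (h : c • M = 0) : M = 0 := by
  have : (c⁻¹ * c) • M = 0 := by rw [mul_smul, h, smul_zero]
  rwa [inv_mul_cancel₀ hc, one_smul] at this

lemma tri_swap {V : Type*} [AddCommMonoid V] (N : ℕ) (F : ℕ → ℕ → V) :
    ∑ e ∈ range (N + 2), ∑ d ∈ range e, F d e
      = ∑ d ∈ range (N + 1), ∑ e ∈ Finset.Ioc d (N + 1), F d e := by
  rw [Finset.sum_sigma', Finset.sum_sigma']
  apply Finset.sum_nbij' (i := fun p => (⟨p.2, p.1⟩ : Σ _ : ℕ, ℕ))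
    (j := fun p => (⟨p.2, p.1⟩ : Σ _ : ℕ, ℕ))
  · intro a ha; simp only [Finset.mem_sigma, Finset.mem_range, Finset.mem_Ioc] at ha ⊢; omega
  · intro a ha; simp only [Finset.mem_sigma, Finset.mem_range, Finset.mem_Ioc] at ha ⊢; omega
  · intro a _; rfl
  · intro a _; rfl
  · intro a _; rfl

lemma vdm {V : Type*} [AddCommGroup V] [Module D V] :
    ∀ (N : ℕ) (w : ℕ → V),
      (∀ e : ℕ, 1 ≤ e → e ≤ N → (e : D) ≠ 0) →
      (∀ k : ℕ, k ≤ N → ∑ d ∈ range (N + 1), ((k : D) ^ d) • w d = 0) →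
      ∀ d, d ≤ N → w d = 0 := by
  intro N
  induction N with
  | zero =>
      intro w _ hsum d hd
      interval_cases d
      simpa using hsum 0 le_rfl
  | succ N ih =>
      intro w hch hsum
      have hsum' : ∀ k : ℕ, k ≤ N →
          ∑ d ∈ range (N + 1), ((k : D) ^ d) • (∑ e ∈ Finset.Ioc d (N + 1), (e.choose d) • w e) = 0 := by
        intro k hk
        have h1 := hsum k (Nat.le_succ_of_le hk)
        have h2 := hsum (k + 1) (Nat.succ_le_succ hk)
        have expand : ∀ e : ℕ, (((k + 1 : ℕ)) : D) ^ e • w e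
            = ∑ d ∈ range (e + 1), ((k : D) ^ d) • ((e.choose d) • w e) := by
          intro e
          have hc : Commute ((k : D)) (1 : D) := Commute.one_right _
          rw [Nat.cast_add, Nat.cast_one, hc.add_pow, Finset.sum_smul]
          apply Finset.sum_congr rfl
          intro d _
          rw [one_pow, mul_one, mul_smul, Nat.cast_smul_eq_nsmul]
        rw [show (range (N + 1 + 1)) = range (N + 2) by norm_num] at h1 h2
        rw [Finset.sum_congr rfl (fun e _ => expand e)] at h2
        -- split inner sums at d = e
        have h2' : (∑ e ∈ range (N + 2), ∑ d ∈ range e, ((k : D) ^ d) • ((e.choose d) • w e))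
            + ∑ e ∈ range (N + 2), ((k : D) ^ e) • w e = 0 := by
          rw [← Finset.sum_add_distrib]
          rw [← h2]
          apply Finset.sum_congr rfl
          intro e _
          rw [Finset.sum_range_succ, Nat.choose_self, one_smul]
        rw [h1, add_zero] at h2'
        rw [tri_swap] at h2'
        rw [← h2']
        apply Finset.sum_congr rfl
        intro d _
        rw [Finset.smul_sum]
      have hd' := ih _ (fun e h1 h2 => hch e h1 (Nat.le_succ_of_le h2)) hsum'
      have hw_top : ∀ t : ℕ, ∀ e : ℕ, 1 ≤ e → e + t = N + 1 → w e = 0 := by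
        intro t
        induction t using Nat.strong_induction_on with
        | _ t iht =>
          intro e h1 het
          have h0 := hd' (e - 1) (by omega)
          have hins : Finset.Ioc (e - 1) (N + 1) = insert e (Finset.Ioc e (N + 1)) := by
            ext x; simp only [Finset.mem_Ioc, Finset.mem_insert]; omega
          rw [hins, Finset.sum_insert (by simp)] at h0
          have hrest : ∑ e' ∈ Finset.Ioc e (N + 1), (e'.choose (e - 1)) • w e' = 0 := by
            apply Finset.sum_eq_zero
            intro e' he'
            simp only [Finset.mem_Ioc] at he'
            rw [iht (N + 1 - e') (by omega) e' (by omega) (by omega), smul_zero]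
          rw [hrest, add_zero] at h0
          have hch2 : e.choose (e - 1) = e := by
            rcases e with _ | e'
            · omega
            · simp [Nat.choose_succ_self_right]
          rw [hch2] at h0
          have : ((e : D)) • w e = 0 := by rw [Nat.cast_smul_eq_nsmul]; exact h0
          exact smul_cancelV (hch e h1 (by omega)) this
      intro d hd
      rcases Nat.eq_zero_or_pos d with h0 | h1
      · subst h0
        have := hsum 0 (Nat.zero_le _)
        rw [Finset.sum_eq_single 0] at this
        · simpa using this
        · intro b _ hb
          rw [Nat.cast_zero, zero_pow hb, zero_smul]
        · intro hb; exact absurd (Finset.mem_range.mpr (by omega)) hb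
      · exact hw_top (N + 1 - d) d h1 (by omega)




variable {m : ℕ} {D : Type*} [DivisionRing D]

/-- `U1 i j a γ = 1 + (a-1) E_ii + γ E_ij`. -/
def U1 (i j : Fin m) (a γ : D) : Matrix (Fin m) (Fin m) D :=
  1 + single i i (a - 1) + single i j γ

lemma U1_mul {i j : Fin m} (hij : i ≠ j) (a c γ δ : D) :
    U1 i j a γ * U1 i j c δ
      = 1 + single i i ((a - 1) + (c - 1) + (a - 1) * (c - 1))
          + single i j (δ + ((a - 1) * δ + γ)) := by
  unfold U1
  have expand : (1 + single i i (a - 1) + single i j γ)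
      * (1 + single i i (c - 1) + single i j δ)
      = 1 + single i i (c - 1) + single i j δ
        + single i i (a - 1)
        + single i i (a - 1) * single i i (c - 1)
        + single i i (a - 1) * single i j δ
        + single i j γ
        + single i j γ * single i i (c - 1)
        + single i j γ * single i j δ := by
    noncomm_ring
  rw [expand, single_mul_single_same, single_mul_single_same,
    single_mul_single_of_ne _ _ _ _ hij.symm, single_mul_single_of_ne _ _ _ _ hij.symm,
    single_add, single_add, single_add, single_add]
  abel

lemma U1_pow {i j : Fin m} (hij : i ≠ j) (a γ : D) (k : ℕ) :
    (U1 i j a γ) ^ k = U1 i j (a ^ k) ((∑ t ∈ range k, a ^ t) * γ) := by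
  induction k with
  | zero =>
      simp [U1, pow_zero]
  | succ k ihk =>
      rw [pow_succ, ihk, U1_mul hij]
      unfold U1
      congr 2
      · congr 1
        rw [pow_succ]
        noncomm_ring
      · congr 1
        rw [Finset.sum_range_succ, add_mul]
        noncomm_ring

/-- the unit with value `U1 i j a γ`. -/
def mkU1 {i j : Fin m} (hij : i ≠ j) {a : D} (ha : a ≠ 0) (γ : D) :
    (Matrix (Fin m) (Fin m) D)ˣ where
  val := U1 i j a γ
  inv := U1 i j a⁻¹ (-(a⁻¹ * γ))
  val_inv := by
    rw [U1_mul hij]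
    have h1 : (a - 1) + (a⁻¹ - 1) + (a - 1) * (a⁻¹ - 1) = 0 := by
      have e : (a - 1) * (a⁻¹ - 1) = a * a⁻¹ - a - a⁻¹ + 1 := by noncomm_ring
      rw [e, mul_inv_cancel₀ ha]
      abel
    have h2 : (-(a⁻¹ * γ)) + ((a - 1) * (-(a⁻¹ * γ)) + γ) = 0 := by
      have e : (a - 1) * (-(a⁻¹ * γ)) = -(a * (a⁻¹ * γ)) + a⁻¹ * γ := by noncomm_ring
      rw [e, ← mul_assoc, mul_inv_cancel₀ ha, one_mul]
      abel
    rw [h1, h2, single_zero, single_zero, add_zero, add_zero]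
  inv_val := by
    rw [U1_mul hij]
    have h1 : (a⁻¹ - 1) + (a - 1) + (a⁻¹ - 1) * (a - 1) = 0 := by
      have e : (a⁻¹ - 1) * (a - 1) = a⁻¹ * a - a⁻¹ - a + 1 := by noncomm_ring
      rw [e, inv_mul_cancel₀ ha]
      abel
    have h2 : γ + ((a⁻¹ - 1) * γ + -(a⁻¹ * γ)) = 0 := by
      noncomm_ring
    rw [h1, h2, single_zero, single_zero, add_zero, add_zero]

lemma mkU1_inv_val {i j : Fin m} (hij : i ≠ j) {a : D} (ha : a ≠ 0) (γ : D) :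
    ((mkU1 hij ha γ)⁻¹).val = U1 i j a⁻¹ (-(a⁻¹ * γ)) := rfl

/-- `U2 i j a b = 1 + (a-1)E_ii + (b-1)E_jj`. -/
def U2 (i j : Fin m) (a b : D) : Matrix (Fin m) (Fin m) D :=
  1 + single i i (a - 1) + single j j (b - 1)

lemma U2_mul {i j : Fin m} (hij : i ≠ j) (a b c d : D) :
    U2 i j a b * U2 i j c d
      = 1 + single i i ((a - 1) + (c - 1) + (a - 1) * (c - 1))
          + single j j ((b - 1) + (d - 1) + (b - 1) * (d - 1)) := by
  unfold U2
  have expand : (1 + single i i (a - 1) + single j j (b - 1))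
      * (1 + single i i (c - 1) + single j j (d - 1))
      = 1 + single i i (c - 1) + single j j (d - 1)
        + single i i (a - 1)
        + single i i (a - 1) * single i i (c - 1)
        + single i i (a - 1) * single j j (d - 1)
        + single j j (b - 1)
        + single j j (b - 1) * single i i (c - 1)
        + single j j (b - 1) * single j j (d - 1) := by
    noncomm_ring
  rw [expand, single_mul_single_same, single_mul_single_same,
    single_mul_single_of_ne _ _ _ _ hij, single_mul_single_of_ne _ _ _ _ hij.symm,
    single_add, single_add, single_add, single_add]
  abel

lemma U2_pow {i j : Fin m} (hij : i ≠ j) (a b : D) (k : ℕ) :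
    (U2 i j a b) ^ k = U2 i j (a ^ k) (b ^ k) := by
  induction k with
  | zero => simp [U2, pow_zero]
  | succ k ihk =>
      rw [pow_succ, ihk, U2_mul hij]
      unfold U2
      congr 2
      · rw [pow_succ]; noncomm_ring
      · rw [pow_succ]; noncomm_ring

def mkU2 {i j : Fin m} (hij : i ≠ j) {a b : D} (ha : a ≠ 0) (hb : b ≠ 0) :
    (Matrix (Fin m) (Fin m) D)ˣ where
  val := U2 i j a b
  inv := U2 i j a⁻¹ b⁻¹
  val_inv := by
    rw [U2_mul hij]
    have h1 : ∀ x : D, x ≠ 0 → (x - 1) + (x⁻¹ - 1) + (x - 1) * (x⁻¹ - 1) = 0 := by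
      intro x hx
      have e : (x - 1) * (x⁻¹ - 1) = x * x⁻¹ - x - x⁻¹ + 1 := by noncomm_ring
      rw [e, mul_inv_cancel₀ hx]
      abel
    rw [h1 a ha, h1 b hb, single_zero, single_zero, add_zero, add_zero]
  inv_val := by
    rw [U2_mul hij]
    have h1 : ∀ x : D, x ≠ 0 → (x⁻¹ - 1) + (x - 1) + (x⁻¹ - 1) * (x - 1) = 0 := by
      intro x hx
      have e : (x⁻¹ - 1) * (x - 1) = x⁻¹ * x - x⁻¹ - x + 1 := by noncomm_ring
      rw [e, inv_mul_cancel₀ hx]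
      abel
    rw [h1 a ha, h1 b hb, single_zero, single_zero, add_zero, add_zero]

lemma mkU2_inv_val {i j : Fin m} (hij : i ≠ j) {a b : D} (ha : a ≠ 0) (hb : b ≠ 0) :
    ((mkU2 hij ha hb)⁻¹).val = U2 i j a⁻¹ b⁻¹ := rfl


section Main

variable {n m : ℕ} {D : Type*} [DivisionRing D]

lemma geom_shift (a : D) (n : ℕ) :
    (∑ t ∈ range n, a ^ t) * a = ∑ d ∈ Finset.Icc 1 n, a ^ d := by
  rw [Finset.sum_mul]
  apply Finset.sum_nbij' (i := fun t => t + 1) (j := fun d => d - 1)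
  · intro t ht; simp only [Finset.mem_range, Finset.mem_Icc] at ht ⊢; omega
  · intro d hd; simp only [Finset.mem_range, Finset.mem_Icc] at hd ⊢; omega
  · intro t _; rfl
  · intro d hd; simp only [Finset.mem_Icc] at hd; omega
  · intro t _; rw [pow_succ]

set_option maxHeartbeats 1600000 in
lemma main_zero (hn : 3 ≤ n)
    (hchar : ringChar D = 0 ∨ n < ringChar D)
    (f g : Matrix (Fin m) (Fin m) D → Matrix (Fin m) (Fin m) D)
    (hf : ∀ X Y, f (X + Y) = f X + f Y)
    (hg : ∀ X Y, g (X + Y) = g X + g Y)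
    (h : ∀ X : (Matrix (Fin m) (Fin m) D)ˣ,
      f (Units.val X) + (Units.val X) ^ n * g (Units.val X⁻¹) = 0)
    (i j : Fin m) (hij : i ≠ j) (β : D) :
    f (single i j β) = 0 ∧ g (single i j β) = 0 := by
  -- basic additivity facts
  have f0 : f 0 = 0 := by
    have h0 := hf 0 0
    rw [add_zero] at h0
    exact (add_eq_left.mp h0.symm)
  have g0 : g 0 = 0 := by
    have h0 := hg 0 0
    rw [add_zero] at h0
    exact (add_eq_left.mp h0.symm)
  have fneg : ∀ X, f (-X) = - f X := by
    intro X
    have h0 := hf X (-X)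
    rw [add_neg_cancel, f0] at h0
    exact (neg_eq_of_add_eq_zero_right h0.symm).symm
  have gneg : ∀ X, g (-X) = - g X := by
    intro X
    have h0 := hg X (-X)
    rw [add_neg_cancel, g0] at h0
    exact (neg_eq_of_add_eq_zero_right h0.symm).symm
  have sbneg : ∀ (x : D), single i j (-x) = -single i j x := by
    intro x
    have h0 := single_add i j x (-x)
    rw [add_neg_cancel, single_zero] at h0
    exact (neg_eq_of_add_eq_zero_right h0.symm).symm
  have charD : ∀ e : ℕ, 1 ≤ e → e ≤ n → (e : D) ≠ 0 := by
    intro e h1 h2 he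
    have hd : ringChar D ∣ e := (CharP.cast_eq_zero_iff D (ringChar D) e).mp he
    rcases hchar with h0 | hlt
    · rw [h0] at hd
      exact absurd (zero_dvd_iff.mp hd) (by omega)
    · have := Nat.le_of_dvd (by omega) hd
      omega
  have two_ne : (2 : D) ≠ 0 := by
    have := charD 2 (by omega) (by omega)
    simpa using this
  have three_ne : (3 : D) ≠ 0 := by
    have := charD 3 (by omega) (by omega)
    simpa using this
  -- the expanded h-instance for U1
  have EXP : ∀ (a : D), a ≠ 0 → ∀ (γ : D),
      f 1 + f (single i i (a - 1)) + f (single i j γ)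
      + (g 1 + g (single i i (a⁻¹ - 1)) + g (single i j (-(a⁻¹ * γ))))
      + (single i i (a ^ n - 1) * g 1
          + single i i (a ^ n - 1) * g (single i i (a⁻¹ - 1))
          + single i i (a ^ n - 1) * g (single i j (-(a⁻¹ * γ))))
      + (single i j ((∑ t ∈ range n, a ^ t) * γ) * g 1
          + single i j ((∑ t ∈ range n, a ^ t) * γ) * g (single i i (a⁻¹ - 1))
          + single i j ((∑ t ∈ range n, a ^ t) * γ) * g (single i j (-(a⁻¹ * γ))))
      = 0 := by
    intro a ha γ
    have H : f (U1 i j a γ) + (U1 i j a γ) ^ n * g (U1 i j a⁻¹ (-(a⁻¹ * γ))) = 0 :=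
      h (mkU1 hij ha γ)
    rw [U1_pow hij] at H
    have ef : f (U1 i j a γ)
        = f 1 + f (single i i (a - 1)) + f (single i j γ) := by
      unfold U1; rw [hf, hf]
    have eg : g (U1 i j a⁻¹ (-(a⁻¹ * γ)))
        = g 1 + g (single i i (a⁻¹ - 1)) + g (single i j (-(a⁻¹ * γ))) := by
      unfold U1; rw [hg, hg]
    rw [ef, eg] at H
    unfold U1 at H
    rw [add_mul, add_mul, one_mul, mul_add, mul_add, mul_add, mul_add] at H
    rw [← H]
    abel
  -- "even part" vanishing
  have ZIP : ∀ (a : D), a ≠ 0 → ∀ (γ : D),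
      single i j ((∑ t ∈ range n, a ^ t) * γ)
        * g (single i j (-(a⁻¹ * γ))) = 0 := by
    intro a ha γ
    have A := EXP a ha γ
    have B := EXP a ha (-γ)
    have C := EXP a ha 0
    simp only [mul_zero, neg_zero, single_zero, f0, g0, zero_mul, add_zero] at C
    simp only [mul_neg, sbneg, fneg, gneg, neg_mul, neg_neg] at A B
    apply half_cancel two_ne
    have comb := congrArg₂ (· - ·) (congrArg₂ (· + ·) A B) (congrArg₂ (· + ·) C C)
    simp only [add_zero, sub_zero] at comb
    simp only [mul_neg, sbneg, gneg, neg_neg]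
    rw [← comb]
    abel
  -- main formula, raw version
  have E1 : ∀ (a : D), a ≠ 0 → ∀ (γ : D),
      f (single i j (a * γ))
      - g (single i j γ)
      - single i i (a ^ n - 1) * g (single i j γ)
      + single i j ((∑ t ∈ range n, a ^ t) * a * γ) * g 1
      + single i j ((∑ t ∈ range n, a ^ t) * a * γ) * g (single i i (a⁻¹ - 1))
      = 0 := by
    intro a ha γ
    have A := EXP a ha (a * γ)
    have C := EXP a ha 0
    have Z := ZIP a ha (a * γ)
    simp only [mul_zero, neg_zero, single_zero, f0, g0, zero_mul, add_zero] at C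
    simp only [← mul_assoc, inv_mul_cancel₀ ha, one_mul] at A Z
    simp only [sbneg, gneg, mul_neg] at A Z
    have comb := congrArg₂ (· - ·) (congrArg₂ (· - ·) A C) Z
    simp only [sub_zero] at comb
    rw [← comb]
    abel
  -- rows other than i of g(βE_ij) vanish
  have ROWS : ∀ (γ : D) (k : Fin m), k ≠ i →
      single k k (1:D) * g (single i j γ) = 0 := by
    intro γ k hk
    have H2 := E1 2 two_ne γ
    have H1 := E1 1 one_ne_zero γ
    simp only [one_mul, one_pow, sub_self, single_zero, zero_mul, inv_one, g0,
      mul_zero, add_zero, sub_zero, Finset.sum_const, Finset.card_range, nsmul_eq_mul,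
      mul_one] at H1
    rw [two_mul γ, single_add, hf] at H2
    have comb := congrArg₂ (· - ·) (congrArg₂ (· - ·) H2 H1) H1
    simp only [sub_zero] at comb
    have final := congrArg (fun M => single k k (1:D) * M) comb
    simp only [mul_add, mul_sub, mul_zero, ← mul_assoc,
      single_mul_single_of_ne (c := (1:D)) k k _ hk, zero_mul] at final
    rw [← final]
    abel
  have DIAGMUL : ∀ (γ : D) (c : D),
      single i i c * g (single i j γ) = c • g (single i j γ) :=
    fun γ c => diag_mul_of_rows (fun r hr col => rows_zero (ROWS γ r hr) col) c
  have E2 : ∀ (a : D), a ≠ 0 → ∀ (γ : D),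
      f (single i j (a * γ))
      - g (single i j γ)
      - (a ^ n - 1) • g (single i j γ)
      + single i j ((∑ t ∈ range n, a ^ t) * a * γ) * g 1
      + single i j ((∑ t ∈ range n, a ^ t) * a * γ) * g (single i i (a⁻¹ - 1))
      = 0 := by
    intro a ha γ
    have e := E1 a ha γ
    rwa [DIAGMUL] at e
  by_cases hC : (2:D) ^ n = 1 ∧ (3:D) ^ n = 1
  · -- Case 2 : both 2 and 3 are n-th roots of unity
    obtain ⟨hc2, hc3⟩ := hC
    have s2 : (∑ t ∈ range n, (2:D) ^ t) = 0 := by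
      have hg2 := geom_sum_mul (2:D) n
      rw [hc2, sub_self, show (2:D) - 1 = 1 by norm_num, mul_one] at hg2
      exact hg2
    have s3 : (∑ t ∈ range n, (3:D) ^ t) = 0 := by
      have hg3 := geom_sum_mul (3:D) n
      rw [hc3, sub_self, show (3:D) - 1 = 2 by norm_num] at hg3
      exact (mul_eq_zero.mp hg3).resolve_right two_ne
    have c2 := E2 2 two_ne β
    rw [s2, hc2, sub_self, zero_smul, zero_mul, zero_mul, single_zero,
      zero_mul, zero_mul, two_mul β, single_add, hf] at c2
    have c3 := E2 3 three_ne β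
    rw [s3, hc3, sub_self, zero_smul, zero_mul, zero_mul, single_zero,
      zero_mul, zero_mul, show (3:D) = 1 + 1 + 1 by norm_num, add_mul, add_mul, one_mul,
      single_add, single_add, hf, hf] at c3
    have hF : f (single i j β) = 0 := by
      have e := congrArg₂ (· - ·) c3 c2
      simp only [sub_zero] at e
      rw [← e]
      abel
    have hG : g (single i j β) = 0 := by
      rw [hF] at c2
      simp only [zero_add, add_zero, sub_zero, zero_sub, neg_eq_zero] at c2
      exact c2
    exact ⟨hF, hG⟩
  · -- Case 1 : some c₀ ∈ {2,3} with c₀^n ≠ 1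
    obtain ⟨c₀, hc₀, hc₀n⟩ : ∃ c : D, c ≠ 0 ∧ c ^ n ≠ 1 := by
      rcases not_and_or.mp hC with h' | h'
      · exact ⟨2, two_ne, h'⟩
      · exact ⟨3, three_ne, h'⟩
    have DPx : ∀ (a : D), a ≠ 0 → ∀ (b : D), b ≠ 0 → ∀ (δ : D),
        single i j δ * f 1
        + single i j δ * f (single i i (a - 1))
        + single i j δ * f (single j j (b - 1))
        + single i j δ * g 1
        + single i j δ * g (single i i (a⁻¹ - 1))
        + single i j δ * g (single j j (b⁻¹ - 1))
        + single i j (δ * (b ^ n - 1)) * g 1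
        + single i j (δ * (b ^ n - 1)) * g (single i i (a⁻¹ - 1))
        + single i j (δ * (b ^ n - 1)) * g (single j j (b⁻¹ - 1))
        = 0 := by
      intro a ha b hb δ
      have H : f (U2 i j a b) + (U2 i j a b) ^ n * g (U2 i j a⁻¹ b⁻¹) = 0 :=
        h (mkU2 hij ha hb)
      rw [U2_pow hij] at H
      have ef : f (U2 i j a b)
          = f 1 + f (single i i (a - 1)) + f (single j j (b - 1)) := by
        unfold U2; rw [hf, hf]
      have eg : g (U2 i j a⁻¹ b⁻¹)
          = g 1 + g (single i i (a⁻¹ - 1)) + g (single j j (b⁻¹ - 1)) := by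
        unfold U2; rw [hg, hg]
      rw [ef, eg] at H
      unfold U2 at H
      rw [add_mul, add_mul, one_mul, mul_add, mul_add, mul_add, mul_add] at H
      have H2 := congrArg (fun M => single i j δ * M) H
      simp only [mul_add, mul_zero, ← mul_assoc,
        single_mul_single_of_ne (c := δ) i j _ hij.symm, zero_mul,
        single_mul_single_same, add_zero] at H2
      rw [← H2]
      abel
    have DIFFi : ∀ (a : D), a ≠ 0 → ∀ (b : D), b ≠ 0 → ∀ (δ : D),
        single i j δ * f (single i i (a - 1))
        + single i j δ * g (single i i (a⁻¹ - 1))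
        + single i j (δ * (b ^ n - 1)) * g (single i i (a⁻¹ - 1))
        = 0 := by
      intro a ha b hb δ
      have HA := DPx a ha b hb δ
      have H1 := DPx 1 one_ne_zero b hb δ
      simp only [sub_self, inv_one, single_zero, f0, g0, mul_zero, add_zero] at H1
      have comb := congrArg₂ (· - ·) HA H1
      simp only [sub_zero] at comb
      rw [← comb]
      abel
    have KILL : ∀ (γ : D) (a : D), a ≠ 0 →
        single i j γ * g (single i i (a⁻¹ - 1)) = 0 := by
      intro γ a ha
      have HB := DIFFi a ha c₀ hc₀ (γ * (c₀ ^ n - 1)⁻¹)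
      have H1 := DIFFi a ha 1 one_ne_zero (γ * (c₀ ^ n - 1)⁻¹)
      simp only [one_pow, sub_self, mul_zero, single_zero, zero_mul, add_zero] at H1
      have comb := congrArg₂ (· - ·) HB H1
      simp only [sub_zero] at comb
      rw [mul_assoc, inv_mul_cancel₀ (sub_ne_zero_of_ne hc₀n), mul_one] at comb
      rw [← comb]
      abel
    have E3 : ∀ (a : D), a ≠ 0 → ∀ (γ : D),
        f (single i j (a * γ))
        - g (single i j γ)
        - (a ^ n - 1) • g (single i j γ)
        + single i j ((∑ t ∈ range n, a ^ t) * a * γ) * g 1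
        = 0 := by
      intro a ha γ
      have e := E2 a ha γ
      rw [KILL _ a ha, add_zero] at e
      exact e
    have fEsmul : ∀ (k : ℕ) (γ : D),
        f (single i j ((k : D) * γ)) = k • f (single i j γ) := by
      intro k
      induction k with
      | zero =>
          intro γ
          simp [f0, zero_nsmul]
      | succ k ih =>
          intro γ
          rw [Nat.cast_succ, add_mul, one_mul, single_add, hf, ih, succ_nsmul]
    set F := f (single i j β) with hFdef
    set G := g (single i j β) with hGdef
    set z := single i j β * g 1 with hzdef
    have cmul : ∀ c : D, single i j (c * β) * g 1 = c • z := by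
      intro c
      have e : single i j (c * β) = c • single i j β := by
        rw [smul_single, smul_eq_mul]
      rw [e, Matrix.smul_mul, ← hzdef]
    have sb_sum : ∀ (s : Finset ℕ) (c : ℕ → D),
        single i j (∑ x ∈ s, c x) = ∑ x ∈ s, single i j (c x) := by
      intro s c
      induction s using Finset.cons_induction with
      | empty => simp
      | cons a s ha ih => rw [Finset.sum_cons, Finset.sum_cons, single_add, ih]
    have hIcc : Finset.Icc 1 n = insert 1 (insert n (Finset.Ico 2 n)) := by
      ext x; simp only [Finset.mem_Icc, Finset.mem_insert, Finset.mem_Ico]; omega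
    have hRange : range (n + 1) = insert 0 (insert 1 (insert n (Finset.Ico 2 n))) := by
      ext x; simp only [Finset.mem_range, Finset.mem_insert, Finset.mem_Ico]; omega
    have hterm : ∀ k : ℕ,
        single i j ((∑ t ∈ range n, ((k:D)) ^ t) * (k:D) * β) * g 1
          = (k:D) • z + ((k:D) ^ n • z + ∑ d ∈ Finset.Ico 2 n, ((k:D)) ^ d • z) := by
      intro k
      rw [geom_shift, hIcc,
        Finset.sum_insert (by simp only [Finset.mem_insert, Finset.mem_Ico]; omega),
        Finset.sum_insert (by simp only [Finset.mem_Ico]; omega), pow_one]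
      rw [add_mul, add_mul, single_add, single_add, add_mul, add_mul]
      rw [cmul, cmul]
      congr 1
      congr 1
      rw [Finset.sum_mul, sb_sum, Finset.sum_mul]
      apply Finset.sum_congr rfl
      intro d _
      rw [cmul]
    have hs1 : F - G + (n:D) • z = 0 := by
      have e := E3 1 one_ne_zero β
      rw [one_mul, one_pow, sub_self, zero_smul, sub_zero] at e
      rw [show ((∑ t ∈ range n, (1:D) ^ t) * 1 * β) = (n:D) * β by
        simp [one_pow, Finset.sum_const, Finset.card_range, mul_one]] at e
      rw [cmul] at e
      exact e
    set w : ℕ → Matrix (Fin m) (Fin m) D :=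
      fun d => if d = 0 then 0 else if d = 1 then (n:D) • z - G - z
        else if d = n then G - z else -z with hwdef
    have hw0 : w 0 = 0 := by simp [hwdef]
    have hw1 : w 1 = (n:D) • z - G - z := by simp [hwdef]
    have hwn : w n = G - z := by
      simp [hwdef, show n ≠ 0 by omega, show n ≠ 1 by omega]
    have hwm : ∀ d ∈ Finset.Ico 2 n, w d = -z := by
      intro d hd
      simp only [Finset.mem_Ico] at hd
      simp [hwdef, show d ≠ 0 by omega, show d ≠ 1 by omega, show d ≠ n by omega]
    have hsum : ∀ k : ℕ, k ≤ n → ∑ d ∈ range (n + 1), ((k:D)) ^ d • w d = 0 := by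
      intro k hk
      rcases Nat.eq_zero_or_pos k with rfl | hk1
      · apply Finset.sum_eq_zero
        intro d hd
        rcases Nat.eq_zero_or_pos d with rfl | hd1
        · rw [hw0, smul_zero]
        · rw [Nat.cast_zero, zero_pow (by omega), zero_smul]
      · have hkD : ((k:ℕ):D) ≠ 0 := charD k hk1 hk
        have Ek := E3 ((k:ℕ):D) hkD β
        rw [fEsmul k β, ← Nat.cast_smul_eq_nsmul D k (f (single i j β)),
          sub_smul, one_smul, hterm k] at Ek
        rw [← hGdef, ← hFdef] at Ek
        have s1k := congrArg (fun M => ((k:ℕ):D) • M) hs1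
        simp only [smul_sub, smul_add, smul_zero, smul_smul] at s1k
        have comb := congrArg₂ (· - ·) s1k Ek
        simp only [sub_zero] at comb
        rw [hRange,
          Finset.sum_insert (by simp only [Finset.mem_insert, Finset.mem_Ico]; omega),
          Finset.sum_insert (by simp only [Finset.mem_insert, Finset.mem_Ico]; omega),
          Finset.sum_insert (by simp only [Finset.mem_Ico]; omega)]
        rw [hw0, smul_zero, hw1, hwn, pow_one,
          Finset.sum_congr rfl (fun d hd => by rw [hwm d hd])]
        simp only [smul_sub, smul_add, smul_smul, smul_neg]
        rw [Finset.sum_neg_distrib]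
        conv_rhs => rw [← comb]
        abel
    have hzero := vdm (D := D) n w charD hsum
    have hz : z = 0 := by
      have h2 := hzero 2 (by omega)
      rw [hwm 2 (by simp only [Finset.mem_Ico]; omega)] at h2
      exact neg_eq_zero.mp h2
    have hG : G = 0 := by
      have hh := hzero n (le_refl n)
      rw [hwn, hz, sub_zero] at hh
      exact hh
    have hF : F = 0 := by
      rw [hz, hG, smul_zero, add_zero, sub_zero] at hs1
      exact hs1
    exact ⟨hF, hG⟩

end Main

end Stmt15Aux

/-- Step 4: for `α ≠ 0, -1` and `i ≠ j`,
`f((αβ + βα)E_ij) = (∑_{k=1}^{n−1} C(n,k) α^k) • f(βE_ij)` and likewise for `g`. -/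
theorem stmt_15 (n m : ℕ) (hn : 3 ≤ n) (hm : 2 ≤ m) (D : Type*) [DivisionRing D]
    (hchar : ringChar D = 0 ∨ n < ringChar D)
    (f g : Matrix (Fin m) (Fin m) D → Matrix (Fin m) (Fin m) D)
    (hf : ∀ X Y, f (X + Y) = f X + f Y)
    (hg : ∀ X Y, g (X + Y) = g X + g Y)
    (h : ∀ X : (Matrix (Fin m) (Fin m) D)ˣ,
      f (Units.val X) + (Units.val X) ^ n * g (Units.val X⁻¹) = 0) :
    ∀ (α β : D) (i j : Fin m), α ≠ 0 → α ≠ -1 → i ≠ j →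
      f (Matrix.single i j (α * β + β * α)) =
        (∑ k ∈ Finset.Icc 1 (n - 1), (n.choose k : D) * α ^ k) •
          f (Matrix.single i j β) ∧
      g (Matrix.single i j (α * β + β * α)) =
        (∑ k ∈ Finset.Icc 1 (n - 1), (n.choose k : D) * α ^ k) •
          g (Matrix.single i j β) := by
  intro α β i j _ _ hij
  obtain ⟨hf0, hg0⟩ := Stmt15Aux.main_zero hn hchar f g hf hg h i j hij (α * β + β * α)
  obtain ⟨hf1, hg1⟩ := Stmt15Aux.main_zero hn hchar f g hf hg h i j hij β
  rw [hf0, hf1, hg0, hg1]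
  constructor <;> rw [smul_zero]
end

section
/- Let n ≥ 3 be an integer, let D be a division ring whose characteristic is either 0 or greater than n, and let R = M_m(D) with m ≥ 2. Suppose f, g : R → R are additive maps satisfying f(X) + X^n · g(X⁻¹) = 0 for every invertible X ∈ R. Then f(α E_ii) = 0 and g(α E_ii) = 0 for every α ∈ D and every i with 1 ≤ i ≤ m. -/
open Matrix Polynomial

lemma additive_zero {A B : Type*} [AddCommMonoid A] [AddCommGroup B] (f : A → B)
    (hf : ∀ x y, f (x + y) = f x + f y) : f 0 = 0 := by
  have h0 := hf 0 0
  rw [add_zero] at h0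
  exact left_eq_add.mp h0

lemma additive_nsmul {A B : Type*} [AddCommMonoid A] [AddCommGroup B] (f : A → B)
    (hf : ∀ x y, f (x + y) = f x + f y) (k : ℕ) (x : A) : f (k • x) = k • f x := by
  induction k with
  | zero => simpa using additive_zero f hf
  | succ k ih => rw [succ_nsmul, hf, ih, succ_nsmul]

/-- There is a natural number `l` whose image in `D` is nonzero and whose `(n-2)`-th power
is not `1`. -/
lemma exists_scalar_aux (n : ℕ) (hn : 3 ≤ n) (D : Type*) [DivisionRing D]
    (hchar : ringChar D = 0 ∨ n < ringChar D) :
    ∃ l : ℕ, (l : D) ≠ 0 ∧ ((l : D)) ^ (n - 2) ≠ 1 := by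
  rcases hchar with h0 | hp
  · haveI : CharP D 0 := h0 ▸ ringChar.charP D
    haveI : CharZero D := CharP.charP_to_charZero D
    refine ⟨2, Nat.cast_ne_zero.mpr (by norm_num), ?_⟩
    rw [show ((2:ℕ) : D) ^ (n - 2) = ((2 ^ (n - 2) : ℕ) : D) from (Nat.cast_pow 2 (n-2)).symm,
      show (1:D) = ((1:ℕ) : D) by simp, Ne, Nat.cast_inj]
    have : 1 < 2 ^ (n - 2) := Nat.one_lt_two_pow_iff.mpr (by omega)
    omega
  · set p := ringChar D with hpdef
    haveI : CharP D p := ringChar.charP D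
    have hp0 : p ≠ 0 := by omega
    have hprime : p.Prime := (CharP.char_is_prime_or_zero D p).resolve_right hp0
    haveI : Fact p.Prime := ⟨hprime⟩
    by_contra hcon
    push_neg at hcon
    have hroot : ∀ l ∈ Finset.Icc 1 (n - 1), ((l : ZMod p)) ^ (n - 2) = 1 := by
      intro l hl
      simp only [Finset.mem_Icc] at hl
      have hlD : (l : D) ≠ 0 := by
        rw [Ne, CharP.cast_eq_zero_iff D p]
        intro hdvd
        have := Nat.le_of_dvd (by omega) hdvd
        omega
      have h1 := hcon l hlD
      have hinj : Function.Injective (ZMod.castHom (dvd_refl p) D) :=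
        (ZMod.castHom (dvd_refl p) D).injective
      apply hinj
      rw [map_pow, map_natCast, _root_.map_one]
      exact h1
    have hsub : (Finset.Icc 1 (n - 1)).image (Nat.cast : ℕ → ZMod p) ⊆
        (nthRoots (n - 2) (1 : ZMod p)).toFinset := by
      intro x hx
      simp only [Finset.mem_image] at hx
      obtain ⟨l, hl, rfl⟩ := hx
      rw [Multiset.mem_toFinset, mem_nthRoots (show 0 < n - 2 by omega)]
      exact hroot l hl
    have hcard1 : ((Finset.Icc 1 (n - 1)).image (Nat.cast : ℕ → ZMod p)).card = n - 1 := by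
      rw [Finset.card_image_of_injOn, Nat.card_Icc]
      · omega
      · intro a ha b hb hab
        simp only [Finset.coe_Icc, Set.mem_Icc] at ha hb
        have ha' : (a : ZMod p).val = a := ZMod.val_cast_of_lt (by omega)
        have hb' : (b : ZMod p).val = b := ZMod.val_cast_of_lt (by omega)
        rw [← ha', ← hb', hab]
    have hcard2 := Finset.card_le_card hsub
    have hcard3 := Multiset.toFinset_card_le (nthRoots (n - 2) (1 : ZMod p))
    have hcard4 := Polynomial.card_nthRoots (n - 2) (1 : ZMod p)
    omega

/-- Invertible diagonal matrix as a unit. -/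
def diagUnit {m : ℕ} {D : Type*} [DivisionRing D] (u : Fin m → D) (hu : ∀ k, u k ≠ 0) :
    (Matrix (Fin m) (Fin m) D)ˣ where
  val := diagonal u
  inv := diagonal fun k => (u k)⁻¹
  val_inv := by
    rw [diagonal_mul_diagonal,
      show (fun k => u k * (u k)⁻¹) = fun _ => (1:D) from funext fun k => mul_inv_cancel₀ (hu k)]
    exact diagonal_one
  inv_val := by
    rw [diagonal_mul_diagonal,
      show (fun k => (u k)⁻¹ * u k) = fun _ => (1:D) from funext fun k => inv_mul_cancel₀ (hu k)]
    exact diagonal_one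

lemma stdB_eq_diagonal {m : ℕ} {D : Type*} [DivisionRing D] (i : Fin m) (γ : D) :
    Matrix.single i i γ = diagonal (fun k => if k = i then γ else 0) := by
  ext a b
  simp only [Matrix.single, Matrix.of_apply, Matrix.diagonal_apply]
  by_cases hab : a = b
  · subst hab
    by_cases hai : a = i
    · subst hai
      simp
    · rw [if_neg (fun hc : i = a ∧ i = a => hai hc.1.symm), if_pos rfl, if_neg hai]
  · rw [if_neg (fun hc : i = a ∧ i = b => hab (hc.1.symm.trans hc.2)), if_neg hab]

/-- Core lemma: `f` vanishes on `α E_ii`. -/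
lemma core_lemma (n m : ℕ) (hn : 3 ≤ n) (D : Type*) [DivisionRing D]
    (hchar : ringChar D = 0 ∨ n < ringChar D)
    (f g : Matrix (Fin m) (Fin m) D → Matrix (Fin m) (Fin m) D)
    (hf : ∀ X Y, f (X + Y) = f X + f Y)
    (hg : ∀ X Y, g (X + Y) = g X + g Y)
    (h : ∀ X : (Matrix (Fin m) (Fin m) D)ˣ,
      f (Units.val X) + (Units.val X) ^ n * g (Units.val X⁻¹) = 0)
    (α : D) (i : Fin m) : f (Matrix.single i i α) = 0 := by
  set v : D → Fin m → D := fun γ k => if k = i then γ else 1 with hv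
  set dm : D → Matrix (Fin m) (Fin m) D := fun γ => diagonal (v γ) with hdm
  -- the key identity
  have key : ∀ (l : ℕ) (γ : D), (l : D) ≠ 0 → γ ≠ 0 →
      ((l:D)^2) • f (dm γ) + ((l:D)^n) • (dm (γ^n) * g (dm γ⁻¹)) = 0 := by
    intro l γ hl hγ
    set u : Fin m → D := fun k => if k = i then (l : D) * γ else (l : D) with hu
    have hu0 : ∀ k, u k ≠ 0 := by
      intro k
      simp only [hu]
      split
      · exact mul_ne_zero hl hγ
      · exact hl
    have hX := h (diagUnit u hu0)
    have hval : Units.val (diagUnit u hu0) = diagonal u := rfl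
    have hinvval : Units.val (diagUnit u hu0)⁻¹ = diagonal (fun k => (u k)⁻¹) := rfl
    rw [hval, hinvval] at hX
    have e1 : diagonal u = l • dm γ := by
      ext a b
      rw [Matrix.smul_apply]
      by_cases hab : a = b
      · subst hab
        simp only [hdm, diagonal_apply_eq, hu, hv]
        by_cases hai : a = i <;> simp [hai, nsmul_eq_mul]
      · simp [hdm, diagonal_apply_ne _ hab]
    have e2 : l • diagonal (fun k => (u k)⁻¹) = dm γ⁻¹ := by
      ext a b
      rw [Matrix.smul_apply]
      by_cases hab : a = b
      · subst hab
        simp only [hdm, diagonal_apply_eq, hu, hv]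
        by_cases hai : a = i
        · rw [if_pos hai, if_pos hai, nsmul_eq_mul, _root_.mul_inv_rev, ← mul_assoc,
            (Nat.cast_commute l γ⁻¹).eq, mul_assoc, mul_inv_cancel₀ hl, mul_one]
        · rw [if_neg hai, if_neg hai, nsmul_eq_mul, mul_inv_cancel₀ hl]
      · simp [hdm, diagonal_apply_ne _ hab]
    have e3 : (dm γ)^n = dm (γ^n) := by
      simp only [hdm]
      rw [diagonal_pow]
      have : (v γ)^n = v (γ^n) := by
        funext k
        simp only [hv, Pi.pow_apply]
        by_cases hk : k = i <;> simp [hk]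
      rw [this]
    have hX2 : l • (f (diagonal u) + (diagonal u)^n * g (diagonal fun k => (u k)⁻¹)) =
        (0 : Matrix (Fin m) (Fin m) D) := by rw [hX, smul_zero]
    rw [smul_add] at hX2
    have t1 : l • f (diagonal u) = (l * l) • f (dm γ) := by
      rw [e1, additive_nsmul f hf, smul_smul]
    have hgw : l • g (diagonal fun k => (u k)⁻¹) = g (dm γ⁻¹) := by
      rw [← e2, additive_nsmul g hg]
    have t2 : l • ((diagonal u)^n * g (diagonal fun k => (u k)⁻¹)) =
        (l^n) • (dm (γ^n) * g (dm γ⁻¹)) := by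
      calc l • ((diagonal u)^n * g (diagonal fun k => (u k)⁻¹))
          = (diagonal u)^n * (l • g (diagonal fun k => (u k)⁻¹)) :=
            (mul_smul_comm l _ _).symm
        _ = (diagonal u)^n * g (dm γ⁻¹) := by rw [hgw]
        _ = (l^n • (dm γ)^n) * g (dm γ⁻¹) := by rw [e1, _root_.smul_pow]
        _ = (l^n) • (dm (γ^n) * g (dm γ⁻¹)) := by rw [e3, smul_mul_assoc]
    rw [t1, t2] at hX2
    have c1 : (l * l) • f (dm γ) = ((l:D)^2) • f (dm γ) := by
      rw [← Nat.cast_smul_eq_nsmul D (l * l), Nat.cast_mul, ← pow_two]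
    have c2 : (l^n) • (dm (γ^n) * g (dm γ⁻¹)) = ((l:D)^n) • (dm (γ^n) * g (dm γ⁻¹)) := by
      rw [← Nat.cast_smul_eq_nsmul D (l^n), Nat.cast_pow]
    rw [c1, c2] at hX2
    exact hX2
  have key1 : ∀ γ : D, γ ≠ 0 → dm (γ^n) * g (dm γ⁻¹) = - f (dm γ) := by
    intro γ hγ
    have k1 := key 1 γ (by simp) hγ
    simp only [Nat.cast_one, one_pow, one_smul] at k1
    exact eq_neg_of_add_eq_zero_right k1
  obtain ⟨l, hl, hl1⟩ := exists_scalar_aux n hn D hchar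
  have hzero : ∀ γ : D, γ ≠ 0 → f (dm γ) = 0 := by
    intro γ hγ
    have k2 := key l γ hl hγ
    rw [key1 γ hγ, smul_neg, ← sub_eq_add_neg, ← sub_smul] at k2
    have hc : (l:D)^2 - (l:D)^n ≠ 0 := by
      have hpow : (l:D)^n = (l:D)^2 * (l:D)^(n-2) := by
        rw [← pow_add]
        congr 1
        omega
      have heq : (l:D)^2 - (l:D)^n = (l:D)^2 * (1 - (l:D)^(n-2)) := by
        rw [mul_sub, mul_one, hpow]
      rw [heq]
      exact mul_ne_zero (pow_ne_zero _ hl) (sub_ne_zero.mpr (Ne.symm hl1))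
    have h3 := congrArg (fun M => ((l:D)^2 - (l:D)^n)⁻¹ • M) k2
    simpa [smul_smul, inv_mul_cancel₀ hc] using h3
  have hdecomp : ∀ γ : D, dm γ = Matrix.single i i γ + dm 0 := by
    intro γ
    ext a b
    rw [Matrix.add_apply, stdB_eq_diagonal]
    by_cases hab : a = b
    · subst hab
      simp only [hdm, diagonal_apply_eq, hv]
      by_cases hai : a = i <;> simp [hai]
    · simp [hdm, diagonal_apply_ne _ hab]
  have hfQ : ∀ γ : D, γ ≠ 0 → f (Matrix.single i i γ) + f (dm 0) = 0 := by
    intro γ hγ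
    have hz := hzero γ hγ
    rw [hdecomp γ, hf] at hz
    exact hz
  have h2 : ((2:D)) ≠ 0 := by
    rcases hchar with h0 | hp
    · haveI : CharP D 0 := h0 ▸ ringChar.charP D
      haveI : CharZero D := CharP.charP_to_charZero D
      exact_mod_cast (Nat.cast_ne_zero (R := D)).mpr (by norm_num : (2:ℕ) ≠ 0)
    · haveI : CharP D (ringChar D) := ringChar.charP D
      have h2' : ((2:ℕ) : D) ≠ 0 := by
        rw [Ne, CharP.cast_eq_zero_iff D (ringChar D)]
        intro hdvd
        have := Nat.le_of_dvd (by omega) hdvd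
        omega
      exact_mod_cast h2'
  have e1 := hfQ 1 one_ne_zero
  have e2 := hfQ 2 h2
  have hsplit : f (Matrix.single i i (2:D)) =
      f (Matrix.single i i 1) + f (Matrix.single i i 1) := by
    rw [show (2:D) = 1 + 1 from (one_add_one_eq_two).symm, Matrix.single_add]
    exact hf _ _
  rw [hsplit] at e2
  have hstd1 : f (Matrix.single i i 1) = 0 := by
    rw [add_assoc, e1, add_zero] at e2
    exact e2
  have hQ0 : f (dm 0) = 0 := by
    rw [hstd1, zero_add] at e1
    exact e1
  by_cases hα : α = 0
  · subst hα
    rw [Matrix.single_zero]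
    exact additive_zero f hf
  · have hz := hfQ α hα
    rw [hQ0, add_zero] at hz
    exact hz

/-- Step 5: `f(αE_ii) = 0 = g(αE_ii)` for all `α ∈ D` and all `i`. -/
theorem stmt_16 (n m : ℕ) (hn : 3 ≤ n) (hm : 2 ≤ m) (D : Type*) [DivisionRing D]
    (hchar : ringChar D = 0 ∨ n < ringChar D)
    (f g : Matrix (Fin m) (Fin m) D → Matrix (Fin m) (Fin m) D)
    (hf : ∀ X Y, f (X + Y) = f X + f Y)
    (hg : ∀ X Y, g (X + Y) = g X + g Y)
    (h : ∀ X : (Matrix (Fin m) (Fin m) D)ˣ,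
      f (Units.val X) + (Units.val X) ^ n * g (Units.val X⁻¹) = 0) :
    ∀ (α : D) (i : Fin m),
      f (Matrix.single i i α) = 0 ∧ g (Matrix.single i i α) = 0 := by
  have h' : ∀ X : (Matrix (Fin m) (Fin m) D)ˣ,
      g (Units.val X) + (Units.val X) ^ n * f (Units.val X⁻¹) = 0 := by
    intro X
    have hx := h X⁻¹
    rw [inv_inv] at hx
    have hmul := congrArg (fun M => (Units.val X)^n * M) hx
    simp only [mul_add, mul_zero] at hmul
    have hone : (Units.val X)^n * (Units.val X⁻¹)^n = 1 := by
      calc (Units.val X)^n * (Units.val X⁻¹)^n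
          = Units.val (X^n * (X⁻¹)^n) := by
            rw [Units.val_mul, Units.val_pow_eq_pow_val, Units.val_pow_eq_pow_val]
        _ = 1 := by rw [inv_pow, mul_inv_cancel, Units.val_one]
    rw [← mul_assoc, hone, one_mul] at hmul
    calc g (Units.val X) + (Units.val X)^n * f (Units.val X⁻¹)
        = (Units.val X)^n * f (Units.val X⁻¹) + g (Units.val X) := by rw [add_comm]
      _ = 0 := hmul
  intro α i
  exact ⟨core_lemma n m hn D hchar f g hf hg h α i,
    core_lemma n m hn D hchar g f hg hf h' α i⟩
end
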